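/- arXiv:2510.16398 — 8 statements merged into one kernel-verified Lean document; each statement's English description precedes it below -/
import Mathlib

section
/- For all modal formulas φ and ψ, if the implication φ → ψ is valid (i.e., satisfied at every world of every Kripke model), then there exists a modal formula θ such that φ → θ is valid, θ → ψ is valid, and sig(θ) ⊆ sig(φ) ∩ sig(ψ). (Craig interpolation for the modal logic K.) -/
inductive ModalFormula (α : Type) : Type
  | atom : α → ModalFormula α
  | top  : ModalFormula α
  | bot  : ModalFormula α
  | neg  : ModalFormula α → ModalFormula α
  | or   : ModalFormula α → ModalFormula α → ModalFormula α
  | and  : ModalFormula α → ModalFormula α → ModalFormula α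
  | dia  : ModalFormula α → ModalFormula α
  | box  : ModalFormula α → ModalFormula α

structure KripkeModel (α : Type) where
  World : Type
  R : World → World → Prop
  V : α → Set World

def Satisfies {α : Type} (M : KripkeModel α) : M.World → ModalFormula α → Prop
  | w, .atom p  => w ∈ M.V p
  | _, .top     => True
  | _, .bot     => False
  | w, .neg φ   => ¬ Satisfies M w φ
  | w, .or φ ψ  => Satisfies M w φ ∨ Satisfies M w ψ
  | w, .and φ ψ => Satisfies M w φ ∧ Satisfies M w ψ
  | w, .dia φ   => ∃ v, M.R w v ∧ Satisfies M v φ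
  | w, .box φ   => ∀ v, M.R w v → Satisfies M v φ

def Valid {α : Type} (φ : ModalFormula α) : Prop :=
  ∀ (M : KripkeModel α) (w : M.World), Satisfies M w φ

def ModalFormula.impl {α : Type} (φ ψ : ModalFormula α) : ModalFormula α :=
  .or (.neg φ) ψ

def sig {α : Type} : ModalFormula α → Set α
  | .atom p  => {p}
  | .top     => ∅
  | .bot     => ∅
  | .neg φ   => sig φ
  | .or φ ψ  => sig φ ∪ sig ψ
  | .and φ ψ => sig φ ∪ sig ψ
  | .dia φ   => sig φ
  | .box φ   => sig φ

def IsBisimulation {α : Type} (τ : Set α) (M M' : KripkeModel α)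
    (Z : M.World → M'.World → Prop) : Prop :=
  ∀ w w', Z w w' →
    (∀ p ∈ τ, (w ∈ M.V p ↔ w' ∈ M'.V p)) ∧
    (∀ v, M.R w v → ∃ v', M'.R w' v' ∧ Z v v') ∧
    (∀ v', M'.R w' v' → ∃ v, M.R w v ∧ Z v v')

def Bisimilar {α : Type} (τ : Set α) (M : KripkeModel α) (w : M.World)
    (M' : KripkeModel α) (w' : M'.World) : Prop :=
  ∃ Z, IsBisimulation τ M M' Z ∧ Z w w'


/-! The interpolant is the disjunction of the depth-`n` characteristic formulas, over the common
signature `L`, of all pointed models of `φ`, where `n` bounds the modal depths of `φ` and `ψ`; there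
are only finitely many such formulas. If a world `b` of some model satisfies the characteristic
formula of a `φ`-world `a`, then `a` and `b` are `n`-bisimilar over `L`, and the product of the two
models along this graded bisimulation, with atoms of `ψ` read in the second model and all others in
the first, satisfies `φ` at `(n, a, b)` (it looks like `a` to `φ`) and hence `ψ`; so `b` satisfies
`ψ` (the product looks like `b` to `ψ`). -/

open scoped Classical

variable {α : Type}

theorem satisfies_impl {M : KripkeModel α} {w : M.World} {φ ψ : ModalFormula α} :
    Satisfies M w (φ.impl ψ) ↔ (Satisfies M w φ → Satisfies M w ψ) :=
  imp_iff_not_or.symm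

theorem sig_finite : ∀ φ : ModalFormula α, (sig φ).Finite
  | .atom _ => Set.finite_singleton _
  | .top | .bot => Set.finite_empty
  | .neg φ | .dia φ | .box φ => sig_finite φ
  | .or φ ψ | .and φ ψ => (sig_finite φ).union (sig_finite ψ)

namespace ModalFormula

def depth : ModalFormula α → ℕ
  | .atom _ | .top | .bot => 0
  | .neg φ => depth φ
  | .or φ ψ | .and φ ψ => max (depth φ) (depth ψ)
  | .dia φ | .box φ => depth φ + 1

noncomputable def conj (s : Finset (ModalFormula α)) : ModalFormula α :=
  s.toList.foldr .and .top

noncomputable def disj (s : Finset (ModalFormula α)) : ModalFormula α :=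
  s.toList.foldr .or .bot

section

variable {M : KripkeModel α} {w : M.World} {s : Finset (ModalFormula α)}

theorem satisfies_conj : Satisfies M w (conj s) ↔ ∀ χ ∈ s, Satisfies M w χ := by
  suffices ∀ l : List (ModalFormula α),
      Satisfies M w (l.foldr .and .top) ↔ ∀ χ ∈ l, Satisfies M w χ by
    simpa [conj] using this s.toList
  intro l
  induction l <;> simp_all [Satisfies]

theorem satisfies_disj : Satisfies M w (disj s) ↔ ∃ χ ∈ s, Satisfies M w χ := by
  suffices ∀ l : List (ModalFormula α),
      Satisfies M w (l.foldr .or .bot) ↔ ∃ χ ∈ l, Satisfies M w χ by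
    simpa [disj] using this s.toList
  intro l
  induction l <;> simp_all [Satisfies]

end

theorem sig_conj_subset {s : Finset (ModalFormula α)} {t : Set α} (h : ∀ χ ∈ s, sig χ ⊆ t) :
    sig (conj s) ⊆ t := by
  suffices ∀ l : List (ModalFormula α), (∀ χ ∈ l, sig χ ⊆ t) → sig (l.foldr .and .top) ⊆ t from
    this s.toList (by simpa using h)
  intro l
  induction l <;> simp_all [sig]

theorem sig_disj_subset {s : Finset (ModalFormula α)} {t : Set α} (h : ∀ χ ∈ s, sig χ ⊆ t) :
    sig (disj s) ⊆ t := by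
  suffices ∀ l : List (ModalFormula α), (∀ χ ∈ l, sig χ ⊆ t) → sig (l.foldr .or .bot) ⊆ t from
    this s.toList (by simpa using h)
  intro l
  induction l <;> simp_all [sig]

end ModalFormula

structure IsGradedBisimulation (τ : Set α) (M M' : KripkeModel α)
    (Z : ℕ → M.World → M'.World → Prop) : Prop where
  atom : ∀ {k w w'}, Z k w w' → ∀ p ∈ τ, (w ∈ M.V p ↔ w' ∈ M'.V p)
  forth : ∀ {k w w'}, Z (k + 1) w w' → ∀ v, M.R w v → ∃ v', M'.R w' v' ∧ Z k v v'
  back : ∀ {k w w'}, Z (k + 1) w w' → ∀ v', M'.R w' v' → ∃ v, M.R w v ∧ Z k v v'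

namespace IsGradedBisimulation

variable {τ : Set α} {M M' : KripkeModel α} {Z : ℕ → M.World → M'.World → Prop}

theorem satisfies_iff (hZ : IsGradedBisimulation τ M M' Z) {φ : ModalFormula α}
    (hsig : sig φ ⊆ τ) {k : ℕ} (hdepth : φ.depth ≤ k) {w : M.World} {w' : M'.World}
    (hw : Z k w w') : Satisfies M w φ ↔ Satisfies M' w' φ := by
  induction φ generalizing k w w' with
  | atom p => exact hZ.atom hw p (hsig rfl)
  | top | bot => rfl
  | neg φ ih => exact not_congr (ih hsig hdepth hw)
  | or φ ψ ihφ ihψ =>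
    simp only [sig, Set.union_subset_iff, ModalFormula.depth, max_le_iff] at hsig hdepth
    exact or_congr (ihφ hsig.1 hdepth.1 hw) (ihψ hsig.2 hdepth.2 hw)
  | and φ ψ ihφ ihψ =>
    simp only [sig, Set.union_subset_iff, ModalFormula.depth, max_le_iff] at hsig hdepth
    exact and_congr (ihφ hsig.1 hdepth.1 hw) (ihψ hsig.2 hdepth.2 hw)
  | dia φ ih =>
    obtain _ | k := k
    · exact absurd hdepth (Nat.not_succ_le_zero _)
    replace hdepth : φ.depth ≤ k := Nat.le_of_succ_le_succ hdepth
    constructor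
    · rintro ⟨v, hv, hφ⟩
      obtain ⟨v', hv', hZv⟩ := hZ.forth hw v hv
      exact ⟨v', hv', (ih hsig hdepth hZv).1 hφ⟩
    · rintro ⟨v', hv', hφ⟩
      obtain ⟨v, hv, hZv⟩ := hZ.back hw v' hv'
      exact ⟨v, hv, (ih hsig hdepth hZv).2 hφ⟩
  | box φ ih =>
    obtain _ | k := k
    · exact absurd hdepth (Nat.not_succ_le_zero _)
    replace hdepth : φ.depth ≤ k := Nat.le_of_succ_le_succ hdepth
    constructor
    · intro hφ v' hv'
      obtain ⟨v, hv, hZv⟩ := hZ.back hw v' hv'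
      exact (ih hsig hdepth hZv).1 (hφ v hv)
    · intro hφ v hv
      obtain ⟨v', hv', hZv⟩ := hZ.forth hw v hv
      exact (ih hsig hdepth hZv).2 (hφ v' hv')

end IsGradedBisimulation

namespace KripkeModel

/-- The index `k` of a world `(k, a, b)` bounds the depth still to be matched, so successors only
need to be `Z k`-related. -/
def amalgam (M M' : KripkeModel α) (Z : ℕ → M.World → M'.World → Prop) (s : Set α) :
    KripkeModel α where
  World := ℕ × M.World × M'.World
  R x y := x.1 = y.1 + 1 ∧ M.R x.2.1 y.2.1 ∧ M'.R x.2.2 y.2.2 ∧ Z y.1 y.2.1 y.2.2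
  V p := {x | if p ∈ s then x.2.2 ∈ M'.V p else x.2.1 ∈ M.V p}

variable {M M' : KripkeModel α} {Z : ℕ → M.World → M'.World → Prop} {τ s : Set α}

theorem isGradedBisimulation_amalgam_fst (hZ : IsGradedBisimulation τ M M' Z) :
    IsGradedBisimulation {p | p ∈ s → p ∈ τ} (amalgam M M' Z s) M
      (fun k x a => x.1 = k ∧ x.2.1 = a ∧ Z k a x.2.2) where
  atom := by
    rintro k ⟨_, a, b⟩ _ ⟨rfl, rfl, hab⟩ p hp
    change (if p ∈ s then b ∈ M'.V p else a ∈ M.V p) ↔ a ∈ M.V p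
    split_ifs with hps
    · exact (hZ.atom hab p (hp hps)).symm
    · rfl
  forth := by
    rintro k ⟨_, a, b⟩ _ ⟨rfl, rfl, -⟩ ⟨_, a', b'⟩ ⟨hk, ha, -, hab'⟩
    obtain rfl := Nat.succ_injective hk
    exact ⟨a', ha, rfl, rfl, hab'⟩
  back := by
    rintro k ⟨_, a, b⟩ _ ⟨rfl, rfl, hab⟩ a' ha
    obtain ⟨b', hb, hab'⟩ := hZ.forth hab a' ha
    exact ⟨(k, a', b'), ⟨rfl, ha, hb, hab'⟩, rfl, rfl, hab'⟩

theorem isGradedBisimulation_amalgam_snd (hZ : IsGradedBisimulation τ M M' Z) :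
    IsGradedBisimulation s (amalgam M M' Z s) M'
      (fun k x b => x.1 = k ∧ x.2.2 = b ∧ Z k x.2.1 b) where
  atom := by
    rintro k ⟨_, a, b⟩ _ ⟨rfl, rfl, -⟩ p hp
    change (if p ∈ s then b ∈ M'.V p else a ∈ M.V p) ↔ b ∈ M'.V p
    rw [if_pos hp]
  forth := by
    rintro k ⟨_, a, b⟩ _ ⟨rfl, rfl, -⟩ ⟨_, a', b'⟩ ⟨hk, -, hb, hab'⟩
    obtain rfl := Nat.succ_injective hk
    exact ⟨b', hb, rfl, rfl, hab'⟩
  back := by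
    rintro k ⟨_, a, b⟩ _ ⟨rfl, rfl, hab⟩ b' hb
    obtain ⟨a', ha, hab'⟩ := hZ.back hab b' hb
    exact ⟨(k, a', b'), ⟨rfl, ha, hb, hab'⟩, rfl, rfl, hab'⟩

end KripkeModel

namespace ModalFormula

section CharFormula

variable (L : Finset α)

noncomputable def atomDiagram (P : Finset α) : ModalFormula α :=
  conj (L.image fun p => if p ∈ P then atom p else neg (atom p))

noncomputable def succCharFormula (P : Finset α) (S : Finset (ModalFormula α)) : ModalFormula α :=
  and (atomDiagram L P) (and (conj (S.image dia)) (box (disj S)))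

/-- A finite set containing every `charFormula L M k w`. -/
noncomputable def charFormulas : ℕ → Finset (ModalFormula α)
  | 0 => L.powerset.image (atomDiagram L)
  | k + 1 => (L.powerset ×ˢ (charFormulas k).powerset).image fun PS => succCharFormula L PS.1 PS.2

noncomputable def charFormula (M : KripkeModel α) : ℕ → M.World → ModalFormula α
  | 0, w => atomDiagram L (L.filter (w ∈ M.V ·))
  | k + 1, w => succCharFormula L (L.filter (w ∈ M.V ·))
      ((charFormulas L k).filter fun χ => ∃ v, M.R w v ∧ charFormula M k v = χ)

variable {L}

section Satisfies

variable {M : KripkeModel α} {w : M.World} {P : Finset α}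

theorem satisfies_atomDiagram :
    Satisfies M w (atomDiagram L P) ↔ ∀ p ∈ L, (w ∈ M.V p ↔ p ∈ P) := by
  simp only [atomDiagram, satisfies_conj, Finset.forall_mem_image]
  refine forall₂_congr fun p _ => ?_
  split_ifs with hp <;> simp [Satisfies, hp]

theorem satisfies_succCharFormula {S : Finset (ModalFormula α)} :
    Satisfies M w (succCharFormula L P S) ↔ (∀ p ∈ L, (w ∈ M.V p ↔ p ∈ P)) ∧
      (∀ χ ∈ S, ∃ v, M.R w v ∧ Satisfies M v χ) ∧ ∀ v, M.R w v → ∃ χ ∈ S, Satisfies M v χ := by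
  simp only [succCharFormula, Satisfies, satisfies_atomDiagram, satisfies_conj, satisfies_disj,
    Finset.forall_mem_image]

end Satisfies

theorem charFormula_mem_charFormulas (M : KripkeModel α) :
    ∀ k (w : M.World), charFormula L M k w ∈ charFormulas L k
  | 0, _ => by
    rw [charFormula, charFormulas]
    exact Finset.mem_image.2 ⟨_, Finset.mem_powerset.2 (Finset.filter_subset _ _), rfl⟩
  | k + 1, _ => by
    rw [charFormula, charFormulas]
    exact Finset.mem_image.2 ⟨(_, _), Finset.mem_product.2
      ⟨Finset.mem_powerset.2 (Finset.filter_subset _ _),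
        Finset.mem_powerset.2 (Finset.filter_subset _ _)⟩, rfl⟩

theorem sig_atomDiagram_subset (P : Finset α) : sig (atomDiagram L P) ⊆ L :=
  sig_conj_subset <| Finset.forall_mem_image.2 fun p hp => by split_ifs <;> simpa [sig] using hp

theorem sig_subset_of_mem_charFormulas : ∀ {k χ}, χ ∈ charFormulas L k → sig χ ⊆ L
  | 0, _, h => by
    obtain ⟨P, -, rfl⟩ := Finset.mem_image.1 h
    exact sig_atomDiagram_subset P
  | k + 1, _, h => by
    obtain ⟨⟨P, S⟩, hPS, rfl⟩ := Finset.mem_image.1 h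
    have hS : ∀ χ ∈ S, sig χ ⊆ L := fun χ hχ =>
      sig_subset_of_mem_charFormulas (Finset.mem_powerset.1 (Finset.mem_product.1 hPS).2 hχ)
    simp only [succCharFormula, sig, Set.union_subset_iff]
    exact ⟨sig_atomDiagram_subset P, sig_conj_subset (Finset.forall_mem_image.2 hS),
      sig_disj_subset hS⟩

theorem satisfies_charFormula (M : KripkeModel α) :
    ∀ k (w : M.World), Satisfies M w (charFormula L M k w)
  | 0, w => satisfies_atomDiagram.2 fun p hp => by simp [hp]
  | k + 1, w => by
    rw [charFormula, satisfies_succCharFormula]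
    refine ⟨fun p hp => by simp [hp], ?_, fun v hv => ⟨_, Finset.mem_filter.2
      ⟨charFormula_mem_charFormulas M k v, v, hv, rfl⟩, satisfies_charFormula M k v⟩⟩
    rintro _ hχ
    obtain ⟨-, v, hv, rfl⟩ := Finset.mem_filter.1 hχ
    exact ⟨v, hv, satisfies_charFormula M k v⟩

theorem isGradedBisimulation_charFormula (M M' : KripkeModel α) :
    IsGradedBisimulation L M M' fun k a b => Satisfies M' b (charFormula L M k a) where
  atom {k a b} h p hp := by
    have hb : b ∈ M'.V p ↔ p ∈ L.filter (a ∈ M.V ·) := by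
      cases k with
      | zero => exact satisfies_atomDiagram.1 h p hp
      | succ k => exact (satisfies_succCharFormula.1 h).1 p hp
    rw [Finset.mem_filter, and_iff_right (Finset.mem_coe.1 hp)] at hb
    exact hb.symm
  forth {k a b} h a' ha := (satisfies_succCharFormula.1 h).2.1 _
    (Finset.mem_filter.2 ⟨charFormula_mem_charFormulas M k a', a', ha, rfl⟩)
  back {k a b} h b' hb := by
    obtain ⟨_, hχ, hb'⟩ := (satisfies_succCharFormula.1 h).2.2 b' hb
    obtain ⟨-, a', ha, rfl⟩ := Finset.mem_filter.1 hχ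
    exact ⟨a', ha, hb'⟩

end CharFormula

noncomputable def interpolant (L : Finset α) (n : ℕ) (φ : ModalFormula α) : ModalFormula α :=
  disj ((charFormulas L n).filter fun χ =>
    ∃ (M : KripkeModel α) (w : M.World), Satisfies M w φ ∧ charFormula L M n w = χ)

variable {L : Finset α} {n : ℕ} {φ ψ : ModalFormula α}

theorem valid_impl_interpolant : Valid (φ.impl (interpolant L n φ)) := fun M w =>
  satisfies_impl.2 fun hw => satisfies_disj.2 ⟨_, Finset.mem_filter.2
    ⟨charFormula_mem_charFormulas M n w, M, w, hw, rfl⟩, satisfies_charFormula M n w⟩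

theorem sig_interpolant_subset : sig (interpolant L n φ) ⊆ L :=
  sig_disj_subset fun _ hχ => sig_subset_of_mem_charFormulas (Finset.mem_filter.1 hχ).1

theorem valid_interpolant_impl (h : Valid (φ.impl ψ)) (hL : sig φ ∩ sig ψ ⊆ L)
    (hφ : φ.depth ≤ n) (hψ : ψ.depth ≤ n) : Valid ((interpolant L n φ).impl ψ) := by
  intro M' b
  refine satisfies_impl.2 fun hb => ?_
  obtain ⟨_, hχ, hb⟩ := satisfies_disj.1 hb
  obtain ⟨-, M, a, ha, rfl⟩ := Finset.mem_filter.1 hχ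
  have hZ := isGradedBisimulation_charFormula (L := L) M M'
  let N := KripkeModel.amalgam M M' (fun k a b => Satisfies M' b (charFormula L M k a)) (sig ψ)
  have hφN : Satisfies N (n, a, b) φ :=
    ((KripkeModel.isGradedBisimulation_amalgam_fst hZ).satisfies_iff
      (fun p hp hpψ => hL ⟨hp, hpψ⟩) hφ ⟨rfl, rfl, hb⟩).2 ha
  exact ((KripkeModel.isGradedBisimulation_amalgam_snd hZ).satisfies_iff subset_rfl hψ
    ⟨rfl, rfl, hb⟩).1 (satisfies_impl.1 (h N (n, a, b)) hφN)

end ModalFormula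

/-- Craig interpolation for the modal logic K. -/
theorem craig_interpolation_K {α : Type} (φ ψ : ModalFormula α)
    (h : Valid (φ.impl ψ)) :
    ∃ θ : ModalFormula α,
      Valid (φ.impl θ) ∧ Valid (θ.impl ψ) ∧ sig θ ⊆ sig φ ∩ sig ψ := by
  have hL := ((sig_finite φ).inter_of_left (sig ψ)).coe_toFinset
  exact ⟨.interpolant _ (max φ.depth ψ.depth) φ, ModalFormula.valid_impl_interpolant,
    ModalFormula.valid_interpolant_impl h hL.superset (le_max_left _ _) (le_max_right _ _),
    ModalFormula.sig_interpolant_subset.trans hL.subset⟩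
end

section
/- For all modal formulas φ and ψ, if the implication φ → ψ is valid, then there exists a modal formula θ such that φ → θ and θ → ψ are valid and every proposition letter occurring positively (respectively negatively) in θ occurs positively (respectively negatively) in both φ and ψ. (Lyndon interpolation for the modal logic K.) -/
/-- `occ true χ` is the set of proposition letters occurring positively in `χ`;
`occ false χ` is the set of letters occurring negatively in `χ`. -/
def occ {α : Type} : Bool → ModalFormula α → Set α
  | b, .atom p  => if b then {p} else ∅
  | _, .top     => ∅
  | _, .bot     => ∅
  | b, .neg φ   => occ (!b) φ
  | b, .or φ ψ  => occ b φ ∪ occ b ψ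
  | b, .and φ ψ => occ b φ ∪ occ b ψ
  | b, .dia φ   => occ b φ
  | b, .box φ   => occ b φ

/-! Maehara's method, read semantically. In negation normal form, `φ → ψ` is valid iff
`{φ, ¬ψ}` is unsatisfiable. For an unsatisfiable multiset split into parts `L` and `R`, an
interpolant (implied by `L`, refuted by `R`, each letter with a polarity it has in both parts)
is built by induction on size along the tableau rules: a rule on `L` transforms the
interpolants of its premises (by `∨` for a branching rule, by `◇` for the modal rule), a rule
on `R` is a rule on `L` for the swapped split, whose interpolants are the negations, and a
literal clash across the split yields the letter itself. When no rule applies, models of the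
diamonds' successor sets, hung below a fresh root, satisfy the whole multiset. -/

inductive ModalNNF (α : Type) : Type
  | lit : Bool → α → ModalNNF α
  | top : ModalNNF α
  | bot : ModalNNF α
  | or : ModalNNF α → ModalNNF α → ModalNNF α
  | and : ModalNNF α → ModalNNF α → ModalNNF α
  | dia : ModalNNF α → ModalNNF α
  | box : ModalNNF α → ModalNNF α

namespace ModalNNF

variable {α : Type}

def toFormula : ModalNNF α → ModalFormula α
  | lit true p => .atom p
  | lit false p => .neg (.atom p)
  | top => .top
  | bot => .bot
  | or a c => .or a.toFormula c.toFormula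
  | and a c => .and a.toFormula c.toFormula
  | dia a => .dia a.toFormula
  | box a => .box a.toFormula

def size : ModalNNF α → ℕ
  | lit _ _ | top | bot => 1
  | or a c | and a c => a.size + c.size + 1
  | dia a | box a => a.size + 1

def unbox? : ModalNNF α → Option (ModalNNF α)
  | box a => some a
  | _ => none

end ModalNNF

namespace ModalFormula

variable {α : Type}

def toNNF : Bool → ModalFormula α → ModalNNF α
  | b, atom p => .lit b p
  | true, top | false, bot => .top
  | true, bot | false, top => .bot
  | b, neg χ => χ.toNNF !b
  | true, or a c => .or (a.toNNF true) (c.toNNF true)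
  | false, or a c => .and (a.toNNF false) (c.toNNF false)
  | true, and a c => .and (a.toNNF true) (c.toNNF true)
  | false, and a c => .or (a.toNNF false) (c.toNNF false)
  | true, dia a => .dia (a.toNNF true)
  | false, dia a => .box (a.toNNF false)
  | true, box a => .box (a.toNNF true)
  | false, box a => .dia (a.toNNF false)

@[simp] theorem satisfies_toNNF (M : KripkeModel α) (w : M.World) (b : Bool)
    (χ : ModalFormula α) :
    Satisfies M w (χ.toNNF b).toFormula ↔ (Satisfies M w χ ↔ b) := by
  induction χ generalizing w b <;> cases b <;>
    simp_all [toNNF, ModalNNF.toFormula, Satisfies, imp_iff_not_or]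

@[simp] theorem occ_toNNF (b c : Bool) (χ : ModalFormula α) :
    occ c (χ.toNNF b).toFormula = occ (c == b) χ := by
  induction χ generalizing b c <;> cases b <;> cases c <;>
    simp_all [toNNF, ModalNNF.toFormula, occ]

theorem satisfies_impl (M : KripkeModel α) (w : M.World) (φ ψ : ModalFormula α) :
    Satisfies M w (φ.impl ψ) ↔ (Satisfies M w φ → Satisfies M w ψ) := by
  simp only [impl, Satisfies, imp_iff_not_or]

end ModalFormula

namespace ModalNNF

variable {α : Type}

def SatAll (M : KripkeModel α) (w : M.World) (S : Multiset (ModalNNF α)) : Prop :=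
  ∀ χ ∈ S, Satisfies M w χ.toFormula

def Satisfiable (S : Multiset (ModalNNF α)) : Prop :=
  ∃ (M : KripkeModel α) (w : M.World), SatAll M w S

def pol (b : Bool) (S : Multiset (ModalNNF α)) : Set α :=
  {p | ∃ χ ∈ S, p ∈ occ b χ.toFormula}

def weight (S : Multiset (ModalNNF α)) : ℕ :=
  (S.map size).sum

def unbox (S : Multiset (ModalNNF α)) : Multiset (ModalNNF α) :=
  S.filterMap unbox?

section

variable {M : KripkeModel α} {w : M.World} {χ : ModalNNF α} {S T : Multiset (ModalNNF α)}

@[simp] theorem satAll_singleton : SatAll M w {χ} ↔ Satisfies M w χ.toFormula := by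
  simp [SatAll]

@[simp] theorem satAll_cons :
    SatAll M w (χ ::ₘ S) ↔ Satisfies M w χ.toFormula ∧ SatAll M w S := by
  simp [SatAll]

@[simp] theorem satAll_add : SatAll M w (S + T) ↔ SatAll M w S ∧ SatAll M w T := by
  simp [SatAll, or_imp, forall_and]

@[simp] theorem pol_singleton (b : Bool) : pol b {χ} = occ b χ.toFormula := by
  ext p; simp [pol]

@[simp] theorem pol_cons (b : Bool) : pol b (χ ::ₘ S) = occ b χ.toFormula ∪ pol b S := by
  ext p; simp [pol]

@[simp] theorem weight_cons : weight (χ ::ₘ S) = χ.size + weight S := by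
  simp [weight]

@[simp] theorem weight_add : weight (S + T) = weight S + weight T := by
  simp [weight]

theorem mem_unbox : χ ∈ unbox S ↔ box χ ∈ S := by
  refine (Multiset.mem_filterMap _ _).trans ⟨?_, fun h => ⟨_, h, rfl⟩⟩
  rintro ⟨ψ, hψ, he⟩
  cases ψ <;> simp_all [unbox?]

@[simp] theorem unbox_add : unbox (S + T) = unbox S + unbox T :=
  Multiset.filterMap_add _ _ _

@[simp] theorem unbox_cons_dia : unbox (dia χ ::ₘ S) = unbox S :=
  Multiset.filterMap_cons_none _ _ rfl

theorem weight_unbox_le (S : Multiset (ModalNNF α)) : weight (unbox S) ≤ weight S := by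
  induction S using Multiset.induction_on with
  | empty => simp [unbox]
  | cons χ S ih =>
    cases χ <;> simp [unbox, unbox?, size, Multiset.filterMap_cons] at ih ⊢ <;> omega

theorem satAll_unbox {v : M.World} (hS : SatAll M w S) (hv : M.R w v) : SatAll M v (unbox S) :=
  fun _ hχ => hS _ (mem_unbox.mp hχ) v hv

theorem pol_unbox_subset (b : Bool) : pol b (unbox S) ⊆ pol b S :=
  fun _ ⟨χ, hχ, hp⟩ => ⟨box χ, mem_unbox.mp hχ, hp⟩

end

structure IsInterpolant (L R : Multiset (ModalNNF α)) (θ : ModalFormula α) : Prop where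
  left : ∀ (M : KripkeModel α) (w : M.World), SatAll M w L → Satisfies M w θ
  right : ∀ (M : KripkeModel α) (w : M.World), SatAll M w R → ¬ Satisfies M w θ
  occ_subset : ∀ b, occ b θ ⊆ pol b L ∩ pol (!b) R

variable {L R : Multiset (ModalNNF α)} {θ θ' : ModalFormula α}

theorem IsInterpolant.symm (h : IsInterpolant L R θ) : IsInterpolant R L θ.neg where
  left M w hR := h.right M w hR
  right M w hL := not_not.mpr (h.left M w hL)
  occ_subset b := by
    simpa [occ, Set.inter_comm] using h.occ_subset !b

theorem isInterpolant_bot (h : ¬ Satisfiable L) : IsInterpolant L R .bot where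
  left M w hL := (h ⟨M, w, hL⟩).elim
  right _ _ _ := id
  occ_subset b := by simp [occ]

theorem isInterpolant_atom {p : α} (hL : lit true p ∈ L) (hR : lit false p ∈ R) :
    IsInterpolant L R (.atom p) where
  left _ _ h := h _ hL
  right _ _ h := h _ hR
  occ_subset b := by
    cases b
    · simp [occ]
    · simp only [occ, ite_true, Set.singleton_subset_iff]
      exact ⟨⟨_, hL, rfl⟩, ⟨_, hR, rfl⟩⟩

theorem IsInterpolant.of_left {L' : Multiset (ModalNNF α)} (h : IsInterpolant L' R θ)
    (hsat : ∀ (M : KripkeModel α) (w : M.World), SatAll M w L → SatAll M w L')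
    (hpol : ∀ b, pol b L' ⊆ pol b L) : IsInterpolant L R θ where
  left M w hL := h.left M w (hsat M w hL)
  right := h.right
  occ_subset b := (h.occ_subset b).trans (Set.inter_subset_inter_left _ (hpol b))

theorem IsInterpolant.or {a c : ModalNNF α} (ha : IsInterpolant (a ::ₘ L) R θ)
    (hc : IsInterpolant (c ::ₘ L) R θ') : IsInterpolant (or a c ::ₘ L) R (θ.or θ') where
  left M w hL := by
    simp only [satAll_cons, toFormula, Satisfies] at hL
    obtain ⟨ha' | hc', hL⟩ := hL
    · exact .inl (ha.left M w (satAll_cons.mpr ⟨ha', hL⟩))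
    · exact .inr (hc.left M w (satAll_cons.mpr ⟨hc', hL⟩))
  right M w hR := by
    rintro (h | h)
    exacts [ha.right M w hR h, hc.right M w hR h]
  occ_subset b := by
    have ha' := ha.occ_subset b
    have hc' := hc.occ_subset b
    simp only [pol_cons, toFormula, occ] at ha' hc' ⊢
    exact Set.union_subset
      (ha'.trans <| Set.inter_subset_inter_left _ <|
        Set.union_subset_union_left _ Set.subset_union_left)
      (hc'.trans <| Set.inter_subset_inter_left _ <|
        Set.union_subset_union_left _ Set.subset_union_right)

theorem IsInterpolant.dia {a : ModalNNF α} (h : IsInterpolant (a ::ₘ unbox L) (unbox R) θ) :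
    IsInterpolant (dia a ::ₘ L) R θ.dia where
  left M w hL := by
    simp only [satAll_cons, toFormula, Satisfies] at hL
    obtain ⟨⟨v, hv, ha⟩, hL⟩ := hL
    exact ⟨v, hv, h.left M v (satAll_cons.mpr ⟨ha, satAll_unbox hL hv⟩)⟩
  right M w hR := fun ⟨v, hv, hθ⟩ => h.right M v (satAll_unbox hR hv) hθ
  occ_subset b := by
    have h' := h.occ_subset b
    simp only [pol_cons, toFormula, occ] at h' ⊢
    exact h'.trans (Set.inter_subset_inter
      (Set.union_subset_union_right _ (pol_unbox_subset b)) (pol_unbox_subset !b))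

end ModalNNF

namespace KripkeModel

variable {α ι : Type}

def rootedSum (M : ι → KripkeModel α) (u : ∀ i, (M i).World) (V₀ : Set α) :
    KripkeModel α where
  World := Option (Σ i, (M i).World)
  R
    | none, y => ∃ i, y = some ⟨i, u i⟩
    | some x, y => ∃ i w v, x = ⟨i, w⟩ ∧ y = some ⟨i, v⟩ ∧ (M i).R w v
  V p := {x | x.elim (p ∈ V₀) fun x => x.2 ∈ (M x.1).V p}

variable (M : ι → KripkeModel α) (u : ∀ i, (M i).World) (V₀ : Set α)

theorem satisfies_rootedSum_some (χ : ModalFormula α) (i : ι) (w : (M i).World) :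
    Satisfies (rootedSum M u V₀) (some ⟨i, w⟩) χ ↔ Satisfies (M i) w χ := by
  induction χ generalizing w with
  | atom p => rfl
  | top | bot => rfl
  | neg φ ih => exact not_congr (ih w)
  | or φ ψ ih₁ ih₂ => exact or_congr (ih₁ w) (ih₂ w)
  | and φ ψ ih₁ ih₂ => exact and_congr (ih₁ w) (ih₂ w)
  | dia φ ih =>
    constructor
    · rintro ⟨_, ⟨j, w', v, hx, rfl, hR⟩, hv⟩
      cases hx
      exact ⟨v, hR, (ih v).mp hv⟩
    · rintro ⟨v, hR, hv⟩
      exact ⟨some ⟨i, v⟩, ⟨i, w, v, rfl, rfl, hR⟩, (ih v).mpr hv⟩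
  | box φ ih =>
    constructor
    · intro h v hR
      exact (ih v).mp (h _ ⟨i, w, v, rfl, rfl, hR⟩)
    · rintro h _ ⟨j, w', v, hx, rfl, hR⟩
      cases hx
      exact (ih v).mpr (h v hR)

end KripkeModel

namespace ModalNNF

variable {α : Type}

/-- A tableau rule applies to `χ` in `S`. -/
def Reducible (S : Multiset (ModalNNF α)) : ModalNNF α → Prop
  | lit true p => lit false p ∈ S
  | lit false _ | box _ => False
  | dia a => ¬ Satisfiable (a ::ₘ unbox S)
  | top | bot | or _ _ | and _ _ => True

theorem satisfiable_of_forall_not_reducible {S : Multiset (ModalNNF α)}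
    (hS : ∀ χ ∈ S, ¬ Reducible S χ) : Satisfiable S := by
  have hsucc (a : {a // dia a ∈ S}) : Satisfiable (a.1 ::ₘ unbox S) := not_not.mp (hS _ a.2)
  choose M u hu using hsucc
  refine ⟨KripkeModel.rootedSum M u {p | lit true p ∈ S}, none, fun χ hχ => ?_⟩
  have hχ' := hS χ hχ
  cases χ with
  | lit b p =>
    cases b
    · exact fun hp => hS _ hp hχ
    · exact hχ
  | top | bot | or | and => exact (hχ' trivial).elim
  | dia a =>
    refine ⟨some ⟨⟨a, hχ⟩, u _⟩, ⟨_, rfl⟩, ?_⟩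
    exact (KripkeModel.satisfies_rootedSum_some ..).mpr ((satAll_cons.mp (hu _)).1)
  | box a =>
    rintro _ ⟨i, rfl⟩
    exact (KripkeModel.satisfies_rootedSum_some ..).mpr
      ((satAll_cons.mp (hu i)).2 _ (mem_unbox.mpr hχ))

theorem exists_isInterpolant_of_reducible {L R : Multiset (ModalNNF α)}
    (ih : ∀ L' R' : Multiset (ModalNNF α), weight (L' + R') < weight (L + R) →
      ¬ Satisfiable (L' + R') → ∃ θ, IsInterpolant L' R' θ)
    (hLR : ¬ Satisfiable (L + R)) {χ : ModalNNF α} (hχL : χ ∈ L)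
    (hχ : Reducible (L + R) χ) :
    ∃ θ, IsInterpolant L R θ := by
  obtain ⟨L, rfl⟩ := Multiset.exists_cons_of_mem hχL
  have not_satisfiable_of {S : Multiset (ModalNNF α)}
      (hS : ∀ (M : KripkeModel α) (w : M.World), SatAll M w S → SatAll M w (χ ::ₘ L + R)) :
      ¬ Satisfiable S := fun ⟨M, w, h⟩ => hLR ⟨M, w, hS M w h⟩
  cases χ with
  | lit b p =>
    cases b
    · exact hχ.elim
    rcases Multiset.mem_add.mp hχ with h | h
    · exact ⟨_, isInterpolant_bot fun ⟨M, w, hw⟩ => hw _ h (hw _ hχL)⟩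
    · exact ⟨_, isInterpolant_atom hχL h⟩
  | top =>
    obtain ⟨θ, hθ⟩ := ih L R (by simp [size])
      (not_satisfiable_of (by simp [toFormula, Satisfies]))
    exact ⟨θ, hθ.of_left (by simp_all) (by simp)⟩
  | bot => exact ⟨_, isInterpolant_bot fun ⟨M, w, hw⟩ => hw _ hχL⟩
  | and a c =>
    obtain ⟨θ, hθ⟩ := ih (a ::ₘ c ::ₘ L) R (by simp [size]; omega)
      (not_satisfiable_of (by simp_all [toFormula, Satisfies]))
    exact ⟨θ, hθ.of_left (by simp_all [toFormula, Satisfies])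
      (fun b => by simp [toFormula, occ, Set.union_assoc])⟩
  | or a c =>
    obtain ⟨θ, hθ⟩ := ih (a ::ₘ L) R (by simp [size])
      (not_satisfiable_of (by simp_all [toFormula, Satisfies]))
    obtain ⟨θ', hθ'⟩ := ih (c ::ₘ L) R (by simp [size])
      (not_satisfiable_of (by simp_all [toFormula, Satisfies]))
    exact ⟨_, hθ.or hθ'⟩
  | dia a =>
    have hlt := weight_unbox_le L
    have hlt' := weight_unbox_le R
    obtain ⟨θ, hθ⟩ := ih (a ::ₘ unbox L) (unbox R) (by simp [size]; omega)
      (by simpa [Reducible, Multiset.cons_add] using hχ)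
    exact ⟨_, hθ.dia⟩
  | box a => exact hχ.elim

theorem exists_isInterpolant (L R : Multiset (ModalNNF α)) (h : ¬ Satisfiable (L + R)) :
    ∃ θ, IsInterpolant L R θ := by
  by_cases hL : ∃ χ ∈ L, Reducible (L + R) χ
  · obtain ⟨χ, hχL, hχ⟩ := hL
    exact exists_isInterpolant_of_reducible
      (fun L' R' _ h' => exists_isInterpolant L' R' h') h hχL hχ
  by_cases hR : ∃ χ ∈ R, Reducible (R + L) χ
  · obtain ⟨χ, hχR, hχ⟩ := hR
    rw [add_comm] at h
    obtain ⟨θ, hθ⟩ := exists_isInterpolant_of_reducible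
      (fun L' R' _ h' => exists_isInterpolant L' R' h') h hχR hχ
    exact ⟨_, hθ.symm⟩
  refine (h (satisfiable_of_forall_not_reducible fun χ hχ => ?_)).elim
  rcases Multiset.mem_add.mp hχ with hχ | hχ
  · exact fun h => hL ⟨χ, hχ, h⟩
  · exact fun h => hR ⟨χ, hχ, by rwa [add_comm]⟩
termination_by weight (L + R)
decreasing_by all_goals simp only [weight_add] at *; omega

end ModalNNF

/-- Lyndon interpolation for the modal logic K. -/
theorem lyndon_interpolation_K {α : Type} (φ ψ : ModalFormula α)
    (h : Valid (φ.impl ψ)) :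
    ∃ θ : ModalFormula α,
      Valid (φ.impl θ) ∧ Valid (θ.impl ψ) ∧
      occ true θ ⊆ occ true φ ∩ occ true ψ ∧
      occ false θ ⊆ occ false φ ∩ occ false ψ := by
  have hunsat : ¬ ModalNNF.Satisfiable ({φ.toNNF true} + {ψ.toNNF false}) :=
    fun ⟨M, w, hw⟩ => by
      simp only [ModalNNF.satAll_add, ModalNNF.satAll_singleton,
        ModalFormula.satisfies_toNNF] at hw
      simpa [hw] using ModalFormula.satisfies_impl .. |>.mp (h M w)
  obtain ⟨θ, hφθ, hθψ, hocc⟩ := ModalNNF.exists_isInterpolant _ _ hunsat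
  refine ⟨θ, fun M w => ?_, fun M w => ?_, by simpa using hocc true, by simpa using hocc false⟩
  · simpa [ModalFormula.satisfies_impl] using hφθ M w
  · simpa [ModalFormula.satisfies_impl, not_imp_not] using hθψ M w
end

section
/- Let σ and τ be sets of proposition letters, and let (M₁,w₁) and (M₂,w₂) be pointed Kripke models. If (M₁,w₁) and (M₂,w₂) are (σ∩τ)-bisimilar, then there exists a pointed Kripke model (N,v) such that (N,v) is σ-bisimilar to (M₁,w₁) and (N,v) is τ-bisimilar to (M₂,w₂). (Amalgamation via bisimulation products.) -/
/-!
Given a `(σ ∩ τ)`-bisimulation `Z`, take as worlds the pairs related by `Z`, with accessibility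
componentwise, and read the letters of `σ` off the first component and all others off the second.
The back-and-forth clauses of `Z` make both projections bounded morphisms, and the graph of a bounded
morphism is a bisimulation. The first projection preserves the letters of `σ` by construction; the
second preserves those of `τ \ σ` by construction and those of `σ ∩ τ` because `Z` does.
-/

theorem IsBisimulation.graph {α : Type} {τ : Set α} {N M : KripkeModel α}
    (f : N.World → M.World) (hV : ∀ p ∈ τ, ∀ a, a ∈ N.V p ↔ f a ∈ M.V p)
    (hforth : ∀ a b, N.R a b → M.R (f a) (f b))
    (hback : ∀ a y, M.R (f a) y → ∃ b, N.R a b ∧ f b = y) :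
    IsBisimulation τ N M (fun a x => f a = x) := by
  rintro a _ rfl
  exact ⟨fun p hp => hV p hp a, fun b hab => ⟨f b, hforth a b hab, rfl⟩, hback a⟩

namespace KripkeModel

open Classical in
def bisimProduct {α : Type} (σ : Set α) (M₁ M₂ : KripkeModel α)
    (Z : M₁.World → M₂.World → Prop) : KripkeModel α where
  World := {x : M₁.World × M₂.World // Z x.1 x.2}
  R a b := M₁.R a.1.1 b.1.1 ∧ M₂.R a.1.2 b.1.2
  V p := {a | if p ∈ σ then a.1.1 ∈ M₁.V p else a.1.2 ∈ M₂.V p}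

section bisimProduct

variable {α : Type} {ρ σ τ : Set α} {M₁ M₂ : KripkeModel α} {Z : M₁.World → M₂.World → Prop}
  {p : α} {a : (bisimProduct σ M₁ M₂ Z).World}

theorem mem_bisimProduct_V_of_mem (hp : p ∈ σ) :
    a ∈ (bisimProduct σ M₁ M₂ Z).V p ↔ a.1.1 ∈ M₁.V p :=
  iff_of_eq (if_pos hp)

theorem mem_bisimProduct_V_of_notMem (hp : p ∉ σ) :
    a ∈ (bisimProduct σ M₁ M₂ Z).V p ↔ a.1.2 ∈ M₂.V p :=
  iff_of_eq (if_neg hp)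

theorem isBisimulation_bisimProduct_fst (hZ : IsBisimulation ρ M₁ M₂ Z) :
    IsBisimulation σ (bisimProduct σ M₁ M₂ Z) M₁ (fun a x => a.1.1 = x) := by
  refine IsBisimulation.graph _ (fun _ hp _ => mem_bisimProduct_V_of_mem hp)
    (fun _ _ hab => hab.1) ?_
  intro a y hy
  obtain ⟨u, hu, hyu⟩ := (hZ a.1.1 a.1.2 a.2).2.1 y hy
  exact ⟨⟨(y, u), hyu⟩, ⟨hy, hu⟩, rfl⟩

theorem isBisimulation_bisimProduct_snd (hZ : IsBisimulation (σ ∩ τ) M₁ M₂ Z) :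
    IsBisimulation τ (bisimProduct σ M₁ M₂ Z) M₂ (fun a y => a.1.2 = y) := by
  refine IsBisimulation.graph _ (fun p hp a => ?_) (fun _ _ hab => hab.2) ?_
  · by_cases hpσ : p ∈ σ
    · exact (mem_bisimProduct_V_of_mem hpσ).trans ((hZ a.1.1 a.1.2 a.2).1 p ⟨hpσ, hp⟩)
    · exact mem_bisimProduct_V_of_notMem hpσ
  · intro a y hy
    obtain ⟨u, hu, huy⟩ := (hZ a.1.1 a.1.2 a.2).2.2 y hy
    exact ⟨⟨(u, y), huy⟩, ⟨hu, hy⟩, rfl⟩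

end bisimProduct

end KripkeModel

/-- Amalgamation via bisimulation products. -/
theorem amalgamation {α : Type} (σ τ : Set α)
    (M₁ : KripkeModel α) (w₁ : M₁.World) (M₂ : KripkeModel α) (w₂ : M₂.World)
    (h : Bisimilar (σ ∩ τ) M₁ w₁ M₂ w₂) :
    ∃ (N : KripkeModel α) (v : N.World),
      Bisimilar σ N v M₁ w₁ ∧ Bisimilar τ N v M₂ w₂ := by
  obtain ⟨Z, hZ, hw⟩ := h
  exact ⟨KripkeModel.bisimProduct σ M₁ M₂ Z, ⟨(w₁, w₂), hw⟩,
    ⟨_, KripkeModel.isBisimulation_bisimProduct_fst hZ, rfl⟩,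
    ⟨_, KripkeModel.isBisimulation_bisimProduct_snd hZ, rfl⟩⟩
end

section
/- The sequent calculus G3K is closed under weakening: if the sequent Γ ⇒ Δ is provable in G3K, then for every modal formula φ, both Γ,φ ⇒ Δ and Γ ⇒ φ,Δ are provable in G3K. -/
/-- Modal formulas built from proposition letters, ⊤, ⊥, ¬, ∧, ∨ and □
(with ◇ treated as an abbreviation of ¬□¬). -/
inductive MF (α : Type) : Type
  | atom : α → MF α
  | top  : MF α
  | bot  : MF α
  | neg  : MF α → MF α
  | and  : MF α → MF α → MF α
  | or   : MF α → MF α → MF α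
  | box  : MF α → MF α

/-- The sequent calculus G3K.  A sequent is a pair of finite multisets of formulas. -/
inductive G3K {α : Type} : Multiset (MF α) → Multiset (MF α) → Prop
  | axId (Γ Δ : Multiset (MF α)) (p : α) : G3K (.atom p ::ₘ Γ) (.atom p ::ₘ Δ)
  | axBot (Γ Δ : Multiset (MF α)) : G3K (.bot ::ₘ Γ) Δ
  | axTop (Γ Δ : Multiset (MF α)) : G3K Γ (.top ::ₘ Δ)
  | negR {Γ Δ : Multiset (MF α)} {φ : MF α} :
      G3K (φ ::ₘ Γ) Δ → G3K Γ (.neg φ ::ₘ Δ)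
  | negL {Γ Δ : Multiset (MF α)} {φ : MF α} :
      G3K Γ (φ ::ₘ Δ) → G3K (.neg φ ::ₘ Γ) Δ
  | andR {Γ Δ : Multiset (MF α)} {φ ψ : MF α} :
      G3K Γ (φ ::ₘ Δ) → G3K Γ (ψ ::ₘ Δ) → G3K Γ (.and φ ψ ::ₘ Δ)
  | andL {Γ Δ : Multiset (MF α)} {φ ψ : MF α} :
      G3K (φ ::ₘ ψ ::ₘ Γ) Δ → G3K (.and φ ψ ::ₘ Γ) Δ
  | orR {Γ Δ : Multiset (MF α)} {φ ψ : MF α} :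
      G3K Γ (φ ::ₘ ψ ::ₘ Δ) → G3K Γ (.or φ ψ ::ₘ Δ)
  | orL {Γ Δ : Multiset (MF α)} {φ ψ : MF α} :
      G3K (φ ::ₘ Γ) Δ → G3K (ψ ::ₘ Γ) Δ → G3K (.or φ ψ ::ₘ Γ) Δ
  | boxR {Γ : Multiset (MF α)} {φ : MF α} (Θ Δ : Multiset (MF α)) :
      G3K Γ {φ} → G3K (Θ + Γ.map .box) (.box φ ::ₘ Δ)

namespace G3K

variable {α : Type}

/-- The `R□` case needs no induction hypothesis: the added formulas are absorbed into the
arbitrary side multisets of its conclusion. -/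
theorem add_context {Γ Δ : Multiset (MF α)} (h : G3K Γ Δ) :
    ∀ Θ Λ : Multiset (MF α), G3K (Γ + Θ) (Δ + Λ) := by
  induction h with
  | axId _ _ p => intro Θ Λ; simpa only [Multiset.cons_add] using axId _ _ p
  | axBot => intro Θ Λ; simpa only [Multiset.cons_add] using axBot _ _
  | axTop => intro Θ Λ; simpa only [Multiset.cons_add] using axTop _ _
  | negR _ ih =>
    intro Θ Λ; simp only [Multiset.cons_add] at ih ⊢; exact negR (ih Θ Λ)
  | negL _ ih =>
    intro Θ Λ; simp only [Multiset.cons_add] at ih ⊢; exact negL (ih Θ Λ)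
  | andR _ _ ih₁ ih₂ =>
    intro Θ Λ; simp only [Multiset.cons_add] at ih₁ ih₂ ⊢; exact andR (ih₁ Θ Λ) (ih₂ Θ Λ)
  | andL _ ih =>
    intro Θ Λ; simp only [Multiset.cons_add] at ih ⊢; exact andL (ih Θ Λ)
  | orR _ ih =>
    intro Θ Λ; simp only [Multiset.cons_add] at ih ⊢; exact orR (ih Θ Λ)
  | orL _ _ ih₁ ih₂ =>
    intro Θ Λ; simp only [Multiset.cons_add] at ih₁ ih₂ ⊢; exact orL (ih₁ Θ Λ) (ih₂ Θ Λ)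
  | boxR _ _ h =>
    intro Θ Λ
    rw [add_right_comm, Multiset.cons_add]
    exact boxR _ _ h

theorem mono {Γ Δ Γ' Δ' : Multiset (MF α)} (h : G3K Γ Δ) (hΓ : Γ ≤ Γ') (hΔ : Δ ≤ Δ') :
    G3K Γ' Δ' := by
  obtain ⟨Θ, rfl⟩ := Multiset.le_iff_exists_add.mp hΓ
  obtain ⟨Λ, rfl⟩ := Multiset.le_iff_exists_add.mp hΔ
  exact h.add_context Θ Λ

end G3K

/-- The sequent calculus G3K is closed under weakening. -/
theorem G3K_weakening {α : Type} {Γ Δ : Multiset (MF α)}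
    (h : G3K Γ Δ) (φ : MF α) :
    G3K (φ ::ₘ Γ) Δ ∧ G3K Γ (φ ::ₘ Δ) :=
  ⟨h.mono (Multiset.le_cons_self Γ φ) le_rfl, h.mono le_rfl (Multiset.le_cons_self Δ φ)⟩
end

section
/- Fix a finite propositional signature σ. For every modal formula χ with sig(χ) ⊆ σ, there exists an acyclic modal automaton A_χ for σ such that A_χ accepts precisely those σ-trees that satisfy χ. -/
/-- `IsPath M w v l` : `l` is a directed path in `M` from `w` to `v`. -/
inductive IsPath {α : Type} (M : KripkeModel α) (w : M.World) : M.World → List M.World → Prop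
  | nil : IsPath M w w [w]
  | cons {v u : M.World} {l : List M.World} :
      IsPath M w v l → M.R v u → IsPath M w u (l ++ [u])

/-- A pointed Kripke model is a tree if every world is reachable from the root
by exactly one directed path. -/
def IsTree {α : Type} (M : KripkeModel α) (w : M.World) : Prop :=
  ∀ v : M.World, ∃! l : List M.World, IsPath M w v l

/-- A σ-tree: a tree-shaped pointed Kripke model over the signature σ
(the valuation is empty outside σ). -/
def IsSigmaTree {α : Type} (σ : Finset α) (M : KripkeModel α) (w : M.World) : Prop :=
  IsTree M w ∧ ∀ p ∉ (↑σ : Set α), M.V p = ∅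

/-- A σ-tree is fat if every non-root world has infinitely many bisimilar siblings. -/
def IsFatSigmaTree {α : Type} (σ : Finset α) (M : KripkeModel α) (w : M.World) : Prop :=
  IsSigmaTree σ M w ∧
  ∀ v v' : M.World, M.R v v' →
    {v'' : M.World | M.R v v'' ∧ Bisimilar (↑σ) M v' M v''}.Infinite

/-- The label of a world: the set of letters of σ true at it. -/
def lab {α : Type} (σ : Finset α) (M : KripkeModel α) (v : M.World) : Set α :=
  {p | p ∈ σ ∧ v ∈ M.V p}

/-- A modal automaton for a finite signature σ: alphabet `2^σ`, a finite set of
states, a transition relation `δ ⊆ Q × 2^σ × ℘(Q)`, an initial state and a set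
of accepting states. -/
structure ModalAutomaton (α : Type) (σ : Finset α) where
  Q : Type
  finQ : Finite Q
  δ : Q → Set α → Set Q → Prop
  δ_lab : ∀ q a S, δ q a S → a ⊆ ↑σ
  q₀ : Q
  F : Set Q

/-- An accepting run of a modal automaton on a pointed Kripke model. -/
def AcceptingRun {α : Type} {σ : Finset α} (A : ModalAutomaton α σ)
    (M : KripkeModel α) (w : M.World) (ρ : M.World → A.Q) : Prop :=
  ρ w = A.q₀ ∧
  ∀ v : M.World, ρ v ∈ A.F ∨ A.δ (ρ v) (lab σ M v) {q | ∃ v', M.R v v' ∧ ρ v' = q}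

/-- Acceptance of a pointed Kripke model by a modal automaton. -/
def Accepts {α : Type} {σ : Finset α} (A : ModalAutomaton α σ)
    (M : KripkeModel α) (w : M.World) : Prop :=
  ∃ ρ : M.World → A.Q, AcceptingRun A M w ρ

/-- A modal automaton is acyclic if its states can be ranked so that every
transition strictly decreases rank. -/
def Acyclic {α : Type} {σ : Finset α} (A : ModalAutomaton α σ) : Prop :=
  ∃ rank : A.Q → ℕ, ∀ q a S, A.δ q a S → ∀ q' ∈ S, rank q' < rank q

/-!
The automaton for `χ` guesses at every world which subformulas of `χ` are true there and checks
that the guess is locally consistent: it agrees with the label on letters, respects the boolean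
connectives, and decides `◇ψ` and `□ψ` from the guesses for `ψ` at the successors. An acyclic
automaton only looks finitely deep, so each state also carries a height, `modalDepth χ + 1` at the
root and dropping by one along every edge; at height `0` the run stops. By induction on formulas,
a consistent guess is correct for every formula whose modal depth is at most the height of the
successors (the truth lemma), which gives soundness at the root. Conversely, on a tree the sets of
true subformulas at height `modalDepth χ + 1 - depth` form an accepting run.
-/

namespace ModalFormula

variable {α : Type}

def subformulas : ModalFormula α → Set (ModalFormula α)
  | atom p  => {atom p}
  | top     => {top}
  | bot     => {bot}
  | neg φ   => insert (neg φ) φ.subformulas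
  | or φ ψ  => insert (or φ ψ) (φ.subformulas ∪ ψ.subformulas)
  | and φ ψ => insert (and φ ψ) (φ.subformulas ∪ ψ.subformulas)
  | dia φ   => insert (dia φ) φ.subformulas
  | box φ   => insert (box φ) φ.subformulas

def modalDepth : ModalFormula α → ℕ
  | atom _  => 0
  | top     => 0
  | bot     => 0
  | neg φ   => φ.modalDepth
  | or φ ψ  => max φ.modalDepth ψ.modalDepth
  | and φ ψ => max φ.modalDepth ψ.modalDepth
  | dia φ   => φ.modalDepth + 1
  | box φ   => φ.modalDepth + 1

@[simp]
theorem mem_subformulas_self (φ : ModalFormula α) : φ ∈ φ.subformulas := by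
  cases φ <;> simp [subformulas]

theorem finite_subformulas (φ : ModalFormula α) : φ.subformulas.Finite := by
  induction φ <;> simp_all [subformulas]

theorem subformulas_subset_of_mem {φ ψ : ModalFormula α} (h : ψ ∈ φ.subformulas) :
    ψ.subformulas ⊆ φ.subformulas := by
  induction φ with
  | atom | top | bot => simp_all [subformulas]
  | neg _ ih | dia _ ih | box _ ih =>
    rcases h with rfl | h
    · rfl
    · exact (ih h).trans (Set.subset_insert _ _)
  | or _ _ ih₁ ih₂ | and _ _ ih₁ ih₂ =>
    rcases h with rfl | h | h
    · rfl
    · exact (ih₁ h).trans (Set.subset_union_left.trans (Set.subset_insert _ _))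
    · exact (ih₂ h).trans (Set.subset_union_right.trans (Set.subset_insert _ _))

theorem mem_sig_of_atom_mem_subformulas {φ : ModalFormula α} {p : α}
    (h : atom p ∈ φ.subformulas) : p ∈ sig φ := by
  induction φ <;> simp_all [subformulas, sig] <;> tauto

/-- The truth condition of `φ` at a world where the formulas in `T` hold, the letters in `a` are
true, and the successors satisfy exactly the formula sets in `𝒯`. -/
def LocalTruth (T : Set (ModalFormula α)) (a : Set α) (𝒯 : Set (Set (ModalFormula α))) :
    ModalFormula α → Prop
  | atom p  => p ∈ a
  | top     => True
  | bot     => False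
  | neg φ   => φ ∉ T
  | or φ ψ  => φ ∈ T ∨ ψ ∈ T
  | and φ ψ => φ ∈ T ∧ ψ ∈ T
  | dia φ   => ∃ T' ∈ 𝒯, φ ∈ T'
  | box φ   => ∀ T' ∈ 𝒯, φ ∈ T'

def IsLocallyConsistent (χ : ModalFormula α) (T : Set (ModalFormula α)) (a : Set α)
    (𝒯 : Set (Set (ModalFormula α))) : Prop :=
  ∀ φ ∈ χ.subformulas, φ ∈ T ↔ LocalTruth T a 𝒯 φ

def theoryAt (χ : ModalFormula α) (M : KripkeModel α) (v : M.World) : Set (ModalFormula α) :=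
  χ.subformulas ∩ {φ | Satisfies M v φ}

section Kripke

variable {σ : Finset α} {χ : ModalFormula α} (M : KripkeModel α)

theorem isLocallyConsistent_theoryAt (hχ : sig χ ⊆ ↑σ) (v : M.World) :
    IsLocallyConsistent χ (χ.theoryAt M v) (lab σ M v) (χ.theoryAt M '' {v' | M.R v v'}) := by
  intro φ hφ
  have hsub := subformulas_subset_of_mem hφ
  cases φ with
  | atom p =>
    have hp : p ∈ σ := hχ (mem_sig_of_atom_mem_subformulas hφ)
    simp [theoryAt, LocalTruth, Satisfies, lab, hφ, hp]
  | top | bot => simp [theoryAt, LocalTruth, Satisfies, hφ]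
  | neg ψ | dia ψ | box ψ =>
    have hψ : ψ ∈ χ.subformulas := hsub (by simp [subformulas])
    simp [theoryAt, LocalTruth, Satisfies, hφ, hψ]
  | or ψ₁ ψ₂ | and ψ₁ ψ₂ =>
    have hψ₁ : ψ₁ ∈ χ.subformulas := hsub (by simp [subformulas])
    have hψ₂ : ψ₂ ∈ χ.subformulas := hsub (by simp [subformulas])
    simp [theoryAt, LocalTruth, Satisfies, hφ, hψ₁, hψ₂]

variable {M}

def IsGradedHintikka (σ : Finset α) (χ : ModalFormula α) (τ : M.World → Set (ModalFormula α))
    (h : M.World → ℕ) : Prop :=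
  ∀ v, 0 < h v → IsLocallyConsistent χ (τ v) (lab σ M v) (τ '' {v' | M.R v v'}) ∧
    ∀ v', M.R v v' → h v' + 1 = h v

variable {τ : M.World → Set (ModalFormula α)} {h : M.World → ℕ}

theorem IsGradedHintikka.mem_iff_satisfies (hτ : IsGradedHintikka σ χ τ h) {ψ : ModalFormula α}
    (hψ : ∀ {v T}, IsLocallyConsistent χ T (lab σ M v) (τ '' {v' | M.R v v'}) →
      (∀ v', M.R v v' → ψ.modalDepth ≤ h v') → (ψ ∈ T ↔ Satisfies M v ψ))
    {v : M.World} (hv : ψ.modalDepth < h v) : ψ ∈ τ v ↔ Satisfies M v ψ := by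
  obtain ⟨hcons, hlower⟩ := hτ v (by omega)
  exact hψ hcons fun v' hvv' => by have := hlower v' hvv'; omega

theorem mem_iff_satisfies_of_isGradedHintikka (hχ : sig χ ⊆ ↑σ) (hτ : IsGradedHintikka σ χ τ h)
    {φ : ModalFormula α} (hφ : φ ∈ χ.subformulas) {v : M.World} {T : Set (ModalFormula α)}
    (hT : IsLocallyConsistent χ T (lab σ M v) (τ '' {v' | M.R v v'}))
    (hv : ∀ v', M.R v v' → φ.modalDepth ≤ h v') :
    φ ∈ T ↔ Satisfies M v φ := by
  induction φ generalizing v T with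
  | atom p =>
    have hp : p ∈ σ := hχ (mem_sig_of_atom_mem_subformulas hφ)
    simp [hT _ hφ, LocalTruth, Satisfies, lab, hp]
  | top | bot => simp [hT _ hφ, LocalTruth, Satisfies]
  | neg ψ ih =>
    have hψ : ψ ∈ χ.subformulas := subformulas_subset_of_mem hφ (by simp [subformulas])
    exact (hT _ hφ).trans (ih hψ hT hv).not
  | or ψ₁ ψ₂ ih₁ ih₂ | and ψ₁ ψ₂ ih₁ ih₂ =>
    have hψ₁ : ψ₁ ∈ χ.subformulas := subformulas_subset_of_mem hφ (by simp [subformulas])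
    have hψ₂ : ψ₂ ∈ χ.subformulas := subformulas_subset_of_mem hφ (by simp [subformulas])
    have h₁ := ih₁ hψ₁ hT fun v' hvv' => le_of_max_le_left (hv v' hvv')
    have h₂ := ih₂ hψ₂ hT fun v' hvv' => le_of_max_le_right (hv v' hvv')
    simp [hT _ hφ, LocalTruth, Satisfies, h₁, h₂]
  | dia ψ ih =>
    have hψ : ψ ∈ χ.subformulas := subformulas_subset_of_mem hφ (by simp [subformulas])
    have hsucc v' (hvv' : M.R v v') := hτ.mem_iff_satisfies (ih hψ) (hv v' hvv')
    simp only [hT _ hφ, LocalTruth, Satisfies, Set.exists_mem_image]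
    exact exists_congr fun v' => and_congr_right (hsucc v')
  | box ψ ih =>
    have hψ : ψ ∈ χ.subformulas := subformulas_subset_of_mem hφ (by simp [subformulas])
    have hsucc v' (hvv' : M.R v v') := hτ.mem_iff_satisfies (ih hψ) (hv v' hvv')
    simp only [hT _ hφ, LocalTruth, Satisfies, Set.forall_mem_image]
    exact forall_congr' fun v' => imp_congr_right (hsucc v')

end Kripke

end ModalFormula

section TreeDepth

variable {α : Type} {M : KripkeModel α} {w : M.World}

theorem IsPath.length_pos {v : M.World} {l : List M.World} (hl : IsPath M w v l) :
    0 < l.length := by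
  cases hl <;> simp

theorem IsPath.eq_of_length_eq_one {v : M.World} {l : List M.World} (hl : IsPath M w v l)
    (h : l.length = 1) : v = w := by
  cases hl with
  | nil => rfl
  | cons hl' _ =>
    have := hl'.length_pos
    simp only [List.length_append, List.length_singleton] at h
    omega

noncomputable def IsTree.depth (ht : IsTree M w) (v : M.World) : ℕ :=
  (ht v).exists.choose.length - 1

theorem IsTree.isPath_choose (ht : IsTree M w) (v : M.World) :
    IsPath M w v (ht v).exists.choose :=
  (ht v).exists.choose_spec

theorem IsTree.depth_eq (ht : IsTree M w) {v : M.World} {l : List M.World}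
    (hl : IsPath M w v l) : ht.depth v = l.length - 1 := by
  rw [IsTree.depth, (ht v).unique (ht.isPath_choose v) hl]

theorem IsTree.depth_root (ht : IsTree M w) : ht.depth w = 0 := by
  simp [ht.depth_eq IsPath.nil]

theorem IsTree.depth_of_rel (ht : IsTree M w) {v v' : M.World} (hvv' : M.R v v') :
    ht.depth v' = ht.depth v + 1 := by
  have hl := ht.isPath_choose v
  rw [ht.depth_eq (hl.cons hvv'), ht.depth_eq hl]
  have := hl.length_pos
  simp only [List.length_append, List.length_singleton]
  omega

theorem IsTree.eq_root_of_depth_eq_zero (ht : IsTree M w) {v : M.World} (hv : ht.depth v = 0) :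
    v = w := by
  have hl := ht.isPath_choose v
  have := hl.length_pos
  exact hl.eq_of_length_eq_one (by rw [IsTree.depth] at hv; omega)

end TreeDepth

namespace ModalFormula

variable {α : Type}

/-- `none` is the initial state; `some (k, T)` guesses that `T` is the set of subformulas of `χ`
true at the current world, which lies at height `k`. -/
abbrev State (χ : ModalFormula α) : Type :=
  Option (Fin (χ.modalDepth + 1) × 𝒫 χ.subformulas)

namespace State

variable {χ : ModalFormula α}

def rank : χ.State → ℕ
  | none => χ.modalDepth + 1
  | some (k, _) => k

/-- Unlike `rank`, this is `0` at the initial state: that state carries no guess, so the truth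
lemma must leave it unconstrained. -/
def height : χ.State → ℕ
  | none => 0
  | some (k, _) => k

def truths : χ.State → Set (ModalFormula α)
  | none => ∅
  | some (_, T) => T

theorem height_eq_rank {s : χ.State} (hs : s.rank ≤ χ.modalDepth) : s.height = s.rank := by
  cases s with
  | none => simp [rank] at hs
  | some => rfl

instance : Finite χ.State := by
  have := χ.finite_subformulas.powerset.to_subtype
  infer_instance

end State

def IsConsistentStep (σ : Finset α) (χ : ModalFormula α) (k : ℕ) (T : Set (ModalFormula α))
    (a : Set α) (S : Set χ.State) : Prop :=
  a ⊆ ↑σ ∧ 0 < k ∧ (∀ s ∈ S, s.rank + 1 = k) ∧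
    IsLocallyConsistent χ T a (State.truths '' S)

def transition (σ : Finset α) (χ : ModalFormula α) :
    χ.State → Set α → Set χ.State → Prop
  | none, a, S => ∃ T, χ ∈ T ∧ IsConsistentStep σ χ (χ.modalDepth + 1) T a S
  | some (k, T), a, S => IsConsistentStep σ χ k T a S

theorem exists_isConsistentStep_of_transition {σ : Finset α} {χ : ModalFormula α} {q : χ.State}
    {a : Set α} {S : Set χ.State} (hq : transition σ χ q a S) :
    ∃ T, IsConsistentStep σ χ q.rank T a S := by
  cases q with
  | none => obtain ⟨T, -, hT⟩ := hq; exact ⟨T, hT⟩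
  | some q => exact ⟨_, hq⟩

def automaton (σ : Finset α) (χ : ModalFormula α) : ModalAutomaton α σ where
  Q := χ.State
  finQ := inferInstance
  δ := transition σ χ
  δ_lab _ _ _ hq := (exists_isConsistentStep_of_transition hq).choose_spec.1
  q₀ := none
  F := {q | q.rank = 0}

theorem acyclic_automaton (σ : Finset α) (χ : ModalFormula α) : Acyclic (automaton σ χ) := by
  refine ⟨State.rank, fun q a S hq s hs => ?_⟩
  obtain ⟨T, -, -, hS, -⟩ := exists_isConsistentStep_of_transition hq
  have := hS s hs
  omega

section Runs

variable {σ : Finset α} {χ : ModalFormula α} {M : KripkeModel α} {w : M.World}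

theorem AcceptingRun.isGradedHintikka {ρ : M.World → χ.State}
    (hρ : AcceptingRun (automaton σ χ) M w ρ) :
    IsGradedHintikka σ χ (State.truths ∘ ρ) (State.height ∘ ρ) := by
  intro v hv
  obtain ⟨⟨k, T⟩, hρv⟩ : ∃ q, ρ v = some q := Option.ne_none_iff_exists'.1 fun h => by
    simp [h, State.height] at hv
  have hk : 0 < (k : ℕ) := by simpa [hρv, State.height] using hv
  have hstep : IsConsistentStep σ χ k T (lab σ M v) (ρ '' {v' | M.R v v'}) := by
    have := hρ.2 v
    simp only [automaton, hρv, State.rank] at this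
    exact this.resolve_left hk.ne'
  obtain ⟨-, -, hlower, hcons⟩ := hstep
  refine ⟨by rwa [Set.image_comp, Function.comp_apply, hρv], fun v' hvv' => ?_⟩
  have hrank := hlower (ρ v') ⟨v', hvv', rfl⟩
  have : (k : ℕ) ≤ χ.modalDepth := Nat.lt_succ_iff.1 k.2
  show (ρ v').height + 1 = (ρ v).height
  rwa [hρv, State.height_eq_rank (by omega)]

theorem AcceptingRun.exists_isConsistentStep_root {ρ : M.World → χ.State}
    (hρ : AcceptingRun (automaton σ χ) M w ρ) :
    ∃ T, χ ∈ T ∧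
      IsConsistentStep σ χ (χ.modalDepth + 1) T (lab σ M w) (ρ '' {v | M.R w v}) := by
  have hroot := (hρ.2 w).resolve_left (hρ.1 ▸ Nat.succ_ne_zero _)
  rwa [hρ.1] at hroot

theorem satisfies_of_accepts (hχ : sig χ ⊆ ↑σ) (hacc : Accepts (automaton σ χ) M w) :
    Satisfies M w χ := by
  obtain ⟨ρ, hρ⟩ : ∃ ρ : M.World → χ.State, AcceptingRun (automaton σ χ) M w ρ :=
    hacc
  obtain ⟨T, hχT, -, -, hlower, hcons⟩ := AcceptingRun.exists_isConsistentStep_root hρ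
  rw [← Set.image_comp] at hcons
  refine (mem_iff_satisfies_of_isGradedHintikka hχ (AcceptingRun.isGradedHintikka hρ)
    (mem_subformulas_self χ) hcons fun v hwv => ?_).1 hχT
  have hrank := hlower (ρ v) ⟨v, hwv, rfl⟩
  simp only [Function.comp_apply, State.height_eq_rank (by omega : (ρ v).rank ≤ _)]
  omega

end Runs

section CanonicalRun

variable {σ : Finset α} {χ : ModalFormula α} {M : KripkeModel α} {w : M.World}

noncomputable def canonicalRun (χ : ModalFormula α) (ht : IsTree M w) (v : M.World) : χ.State :=
  if hv : ht.depth v = 0 then none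
  else
    some (⟨χ.modalDepth + 1 - ht.depth v, by omega⟩, ⟨χ.theoryAt M v, Set.inter_subset_left⟩)

variable (ht : IsTree M w)

theorem rank_canonicalRun (v : M.World) :
    (canonicalRun χ ht v).rank = χ.modalDepth + 1 - ht.depth v := by
  unfold canonicalRun
  split_ifs with hv <;> simp [State.rank, hv]

theorem truths_canonicalRun {v : M.World} (hv : ht.depth v ≠ 0) :
    (canonicalRun χ ht v).truths = χ.theoryAt M v := by
  simp [canonicalRun, hv, State.truths]

theorem isConsistentStep_canonicalRun (hχ : sig χ ⊆ ↑σ) {v : M.World}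
    (hv : ht.depth v < χ.modalDepth + 1) :
    IsConsistentStep σ χ (χ.modalDepth + 1 - ht.depth v) (χ.theoryAt M v) (lab σ M v)
      (canonicalRun χ ht '' {v' | M.R v v'}) := by
  refine ⟨fun p hp => hp.1, by omega, ?_, ?_⟩
  · rintro _ ⟨v', hvv', rfl⟩
    rw [rank_canonicalRun, ht.depth_of_rel hvv']
    omega
  · have hsucc : State.truths '' (canonicalRun χ ht '' {v' | M.R v v'}) =
        χ.theoryAt M '' {v' | M.R v v'} := by
      rw [← Set.image_comp]
      exact Set.image_congr fun v' hvv' =>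
        truths_canonicalRun ht (by rw [ht.depth_of_rel hvv']; omega)
    rw [hsucc]
    exact isLocallyConsistent_theoryAt M hχ v

theorem acceptingRun_canonicalRun (hχ : sig χ ⊆ ↑σ) (hw : Satisfies M w χ) :
    AcceptingRun (automaton σ χ) M w (canonicalRun χ ht) := by
  refine ⟨by simp [canonicalRun, ht.depth_root, automaton], fun v => ?_⟩
  by_cases hv : ht.depth v = 0
  · obtain rfl := ht.eq_root_of_depth_eq_zero hv
    have hstep := isConsistentStep_canonicalRun (σ := σ) ht hχ (v := v) (by omega)
    rw [hv, Nat.sub_zero] at hstep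
    right
    rw [show canonicalRun χ ht v = none from dif_pos hv]
    exact ⟨χ.theoryAt M v, ⟨mem_subformulas_self χ, hw⟩, hstep⟩
  · by_cases hleaf : χ.modalDepth + 1 ≤ ht.depth v
    · left
      show (canonicalRun χ ht v).rank = 0
      rw [rank_canonicalRun]
      omega
    · right
      rw [show canonicalRun χ ht v = _ from dif_neg hv]
      exact isConsistentStep_canonicalRun ht hχ (by omega)

end CanonicalRun

end ModalFormula

/-- For every modal formula over a finite signature σ there is an acyclic modal
automaton accepting precisely the σ-trees satisfying it. -/
theorem formula_to_automaton {α : Type} (σ : Finset α)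
    (χ : ModalFormula α) (hχ : sig χ ⊆ ↑σ) :
    ∃ A : ModalAutomaton α σ, Acyclic A ∧
      ∀ (M : KripkeModel α) (w : M.World), IsSigmaTree σ M w →
        (Accepts A M w ↔ Satisfies M w χ) :=
  ⟨ModalFormula.automaton σ χ, ModalFormula.acyclic_automaton σ χ, fun _ _ hw =>
    ⟨ModalFormula.satisfies_of_accepts hχ,
      fun hsat => ⟨_, ModalFormula.acceptingRun_canonicalRun hw.1 hχ hsat⟩⟩⟩
end

section
/- Fix a finite propositional signature σ. For every acyclic modal automaton A for σ, there exists a modal formula χ_A with sig(χ_A) ⊆ σ such that a fat σ-tree satisfies χ_A if and only if it is accepted by A. -/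
/-! The formula `χ_q` for a state `q` is `⊤` if `q` is accepting, and otherwise the disjunction,
over the transitions `(q, a, S)`, of "the label is `a`, every `q' ∈ S` has a successor satisfying
`χ_{q'}`, and every successor satisfies some `χ_{q'}` with `q' ∈ S`"; acyclicity makes this
recursion well founded. An accepting run labels every world `v` by a state whose formula holds at
`v`. Conversely, if `χ_q` holds at `u`, a run is built top-down; the only difficulty is that the
states of `S` must be realised by *pairwise distinct* children, which fatness provides: a child
satisfying `χ_{q'}` has infinitely many bisimilar, hence `χ_{q'}`-satisfying, siblings. -/

open Function

theorem exists_injective_forall_mem_of_infinite {ι β : Type*} [Finite ι] {W : ι → Set β}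
    (hW : ∀ i, (W i).Infinite) : ∃ g : ι → β, Injective g ∧ ∀ i, g i ∈ W i := by
  classical
  have := Fintype.ofFinite ι
  choose T hTW hT using fun i => (hW i).exists_subset_card_eq (Fintype.card ι)
  have hall (s : Finset ι) : s.card ≤ (s.biUnion T).card := by
    rcases s.eq_empty_or_nonempty with rfl | ⟨i, hi⟩
    · simp
    · calc s.card ≤ Fintype.card ι := s.card_le_univ
        _ = (T i).card := (hT i).symm
        _ ≤ (s.biUnion T).card := Finset.card_le_card (Finset.subset_biUnion_of_mem T hi)
  obtain ⟨g, hg, hgT⟩ := (Finset.all_card_le_biUnion_card_iff_exists_injective T).mp hall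
  exact ⟨g, hg, fun i => hTW i (hgT i)⟩

theorem exists_image_eq_of_infinite {β γ : Type*} [Nonempty γ] {C : Set β} {S : Set γ}
    (hS : S.Finite) {r : β → γ → Prop} (hcover : ∀ v ∈ C, ∃ q ∈ S, r v q)
    (hwit : ∀ q ∈ S, {v | v ∈ C ∧ r v q}.Infinite) :
    ∃ f : β → γ, (∀ v ∈ C, r v (f v)) ∧ f '' C = S := by
  have := hS.to_subtype
  obtain ⟨g, hg, hgW⟩ := exists_injective_forall_mem_of_infinite fun q : S => hwit q q.2
  choose! f₀ hf₀S hf₀ using hcover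
  refine ⟨extend g Subtype.val f₀, fun v hv => ?_, ?_⟩
  · by_cases hvg : ∃ q, g q = v
    · obtain ⟨q, rfl⟩ := hvg
      rw [hg.extend_apply]
      exact (hgW q).2
    · rw [extend_apply' _ _ _ hvg]
      exact hf₀ v hv
  · apply subset_antisymm
    · rintro _ ⟨v, hv, rfl⟩
      by_cases hvg : ∃ q, g q = v
      · obtain ⟨q, rfl⟩ := hvg
        rw [hg.extend_apply]
        exact q.2
      · rw [extend_apply' _ _ _ hvg]
        exact hf₀S v hv
    · intro q hq
      exact ⟨g ⟨q, hq⟩, (hgW ⟨q, hq⟩).1, hg.extend_apply _ _ _⟩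

variable {α : Type}

namespace ModalFormula

noncomputable def bigAnd {ι : Type*} [Finite ι] (φ : ι → ModalFormula α) : ModalFormula α :=
  letI := Fintype.ofFinite ι
  (Finset.univ.toList.map φ).foldr .and .top

noncomputable def bigOr {ι : Type*} [Finite ι] (φ : ι → ModalFormula α) : ModalFormula α :=
  letI := Fintype.ofFinite ι
  (Finset.univ.toList.map φ).foldr .or .bot

variable {ι : Type*} [Finite ι] {φ : ι → ModalFormula α}

theorem satisfies_foldr_and (M : KripkeModel α) (v : M.World) (l : List (ModalFormula α)) :
    Satisfies M v (l.foldr .and .top) ↔ ∀ ψ ∈ l, Satisfies M v ψ := by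
  induction l <;> simp [Satisfies, *]

theorem satisfies_foldr_or (M : KripkeModel α) (v : M.World) (l : List (ModalFormula α)) :
    Satisfies M v (l.foldr .or .bot) ↔ ∃ ψ ∈ l, Satisfies M v ψ := by
  induction l <;> simp [Satisfies, *]

theorem sig_foldr_subset {s : Set α} (c : ModalFormula α → ModalFormula α → ModalFormula α)
    (hc : ∀ ψ χ, sig (c ψ χ) = sig ψ ∪ sig χ) (e : ModalFormula α) (he : sig e = ∅)
    {l : List (ModalFormula α)} (hl : ∀ ψ ∈ l, sig ψ ⊆ s) : sig (l.foldr c e) ⊆ s := by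
  induction l with
  | nil => simp [he]
  | cons ψ l ih => simp_all

theorem satisfies_bigAnd (M : KripkeModel α) (v : M.World) :
    Satisfies M v (bigAnd φ) ↔ ∀ i, Satisfies M v (φ i) := by
  simp [bigAnd, satisfies_foldr_and]

theorem satisfies_bigOr (M : KripkeModel α) (v : M.World) :
    Satisfies M v (bigOr φ) ↔ ∃ i, Satisfies M v (φ i) := by
  simp [bigOr, satisfies_foldr_or]

theorem sig_bigAnd_subset {s : Set α} (h : ∀ i, sig (φ i) ⊆ s) : sig (bigAnd φ) ⊆ s :=
  sig_foldr_subset _ (fun _ _ => rfl) _ rfl (by simpa using h)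

theorem sig_bigOr_subset {s : Set α} (h : ∀ i, sig (φ i) ⊆ s) : sig (bigOr φ) ⊆ s :=
  sig_foldr_subset _ (fun _ _ => rfl) _ rfl (by simpa using h)

end ModalFormula

open ModalFormula

theorem IsBisimulation.satisfies_iff {τ : Set α} {M M' : KripkeModel α}
    {Z : M.World → M'.World → Prop} (hZ : IsBisimulation τ M M' Z) {φ : ModalFormula α}
    (hφ : sig φ ⊆ τ) {v : M.World} {v' : M'.World} (hvv' : Z v v') :
    Satisfies M v φ ↔ Satisfies M' v' φ := by
  induction φ generalizing v v' with
  | atom p => exact (hZ v v' hvv').1 p (hφ rfl)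
  | top | bot => rfl
  | neg φ ih => exact not_congr (ih hφ hvv')
  | or φ ψ ihφ ihψ =>
    rw [sig, Set.union_subset_iff] at hφ
    exact or_congr (ihφ hφ.1 hvv') (ihψ hφ.2 hvv')
  | and φ ψ ihφ ihψ =>
    rw [sig, Set.union_subset_iff] at hφ
    exact and_congr (ihφ hφ.1 hvv') (ihψ hφ.2 hvv')
  | dia φ ih =>
    obtain ⟨-, hforth, hback⟩ := hZ v v' hvv'
    constructor
    · rintro ⟨u, hu, hsat⟩
      obtain ⟨u', hu', hZu⟩ := hforth u hu
      exact ⟨u', hu', (ih hφ hZu).1 hsat⟩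
    · rintro ⟨u', hu', hsat⟩
      obtain ⟨u, hu, hZu⟩ := hback u' hu'
      exact ⟨u, hu, (ih hφ hZu).2 hsat⟩
  | box φ ih =>
    obtain ⟨-, hforth, hback⟩ := hZ v v' hvv'
    constructor
    · intro h u' hu'
      obtain ⟨u, hu, hZu⟩ := hback u' hu'
      exact (ih hφ hZu).1 (h u hu)
    · intro h u hu
      obtain ⟨u', hu', hZu⟩ := hforth u hu
      exact (ih hφ hZu).2 (h u' hu')

theorem IsFatSigmaTree.infinite_siblings_satisfying {σ : Finset α} {M : KripkeModel α}
    {w u v : M.World} (hfat : IsFatSigmaTree σ M w) {φ : ModalFormula α} (hφ : sig φ ⊆ σ)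
    (huv : M.R u v) (hv : Satisfies M v φ) : {v' | M.R u v' ∧ Satisfies M v' φ}.Infinite := by
  refine (hfat.2 u v huv).mono ?_
  rintro v' ⟨hu, Z, hZ, hvv'⟩
  exact ⟨hu, (hZ.satisfies_iff hφ hvv').1 hv⟩

section Tree

variable {M : KripkeModel α} {w : M.World}

theorem IsPath.exists_reverse_eq_cons {v : M.World} {l : List M.World} (h : IsPath M w v l) :
    ∃ l', l.reverse = v :: l' := by
  induction h with
  | nil => exact ⟨[], rfl⟩
  | cons _ _ _ => exact ⟨_, List.reverse_concat ..⟩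

theorem IsTree.induction (htree : IsTree M w) {P : M.World → Prop} (hw : P w)
    (hR : ∀ u v, M.R u v → P u → P v) (v : M.World) : P v := by
  obtain ⟨l, hl, -⟩ := htree v
  induction hl with
  | nil => exact hw
  | cons _ huv ih => exact hR _ _ huv ih

/-- Evaluates a top-down definition along a path read backwards, `v :: u :: … :: w`. -/
def foldReversedPath {W Q : Type*} (q₀ : Q) (next : W → Q → W → Q) : List W → Q
  | v :: u :: l => next u (foldReversedPath q₀ next (u :: l)) v
  | _ => q₀

theorem IsTree.exists_topDown (htree : IsTree M w) {Q : Type*} (q₀ : Q)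
    (next : M.World → Q → M.World → Q) :
    ∃ ρ : M.World → Q, ρ w = q₀ ∧ ∀ u v, M.R u v → ρ v = next u (ρ u) v := by
  choose path hpath huniq using htree
  refine ⟨fun v => foldReversedPath q₀ next (path v).reverse, ?_, fun u v huv => ?_⟩
  · simp [← huniq w [w] .nil, foldReversedPath]
  · obtain ⟨l, hl⟩ := (hpath u).exists_reverse_eq_cons
    simp [← huniq v _ ((hpath u).cons huv), hl, foldReversedPath]

end Tree

attribute [local instance] ModalAutomaton.finQ

variable {σ : Finset α} {A : ModalAutomaton α σ}

instance ModalAutomaton.finite_transitions (q : A.Q) :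
    Finite {t : Set α × Set A.Q // A.δ q t.1 t.2} :=
  Set.Finite.to_subtype <| (σ.finite_toSet.finite_subsets.prod Set.finite_univ).subset
    fun _ ht => ⟨A.δ_lab _ _ _ ht, trivial⟩

open Classical in
noncomputable def labelFormula (σ : Finset α) (a : Set α) : ModalFormula α :=
  bigAnd fun p : σ => if p.1 ∈ a then .atom p else .neg (.atom p)

theorem sig_labelFormula_subset (a : Set α) : sig (labelFormula σ a) ⊆ σ :=
  sig_bigAnd_subset fun p => by split_ifs <;> simp [sig]

theorem satisfies_labelFormula {a : Set α} (ha : a ⊆ σ) (M : KripkeModel α) (v : M.World) :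
    Satisfies M v (labelFormula σ a) ↔ lab σ M v = a := by
  rw [labelFormula, satisfies_bigAnd, Set.ext_iff]
  refine ⟨fun h p => ?_, fun h p => ?_⟩
  · by_cases hp : p ∈ σ
    · have := h ⟨p, hp⟩
      by_cases hpa : p ∈ a <;> simp_all [Satisfies, lab]
    · exact iff_of_false (fun h => hp h.1) (fun hpa => hp (ha hpa))
  · split_ifs with hpa
    · exact ((h p).2 hpa).2
    · exact fun hv => hpa ((h p).1 ⟨p.2, hv⟩)

noncomputable def Acyclic.rank (hA : Acyclic A) : A.Q → ℕ := Classical.choose hA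

theorem Acyclic.rank_lt (hA : Acyclic A) {q : A.Q} {a : Set α} {S : Set A.Q} (hδ : A.δ q a S)
    {q' : A.Q} (hq' : q' ∈ S) : hA.rank q' < hA.rank q :=
  Classical.choose_spec hA q a S hδ q' hq'

theorem Acyclic.induction (hA : Acyclic A) {P : A.Q → Prop}
    (h : ∀ q, (∀ a S, A.δ q a S → ∀ q' ∈ S, P q') → P q) (q : A.Q) : P q :=
  (InvImage.wf hA.rank wellFounded_lt).induction q fun q ih =>
    h q fun _ _ hδ _ hq' => ih _ (hA.rank_lt hδ hq')

open Classical in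
noncomputable def Acyclic.stateFormula (hA : Acyclic A) (q : A.Q) : ModalFormula α :=
  if q ∈ A.F then .top
  else bigOr fun t : {x : Set α × Set A.Q // A.δ q x.1 x.2} =>
    .and (labelFormula σ t.1.1)
      (.and (bigAnd fun q' : t.1.2 => .dia (hA.stateFormula q'))
        (.box (bigOr fun q' : t.1.2 => hA.stateFormula q')))
termination_by hA.rank q
decreasing_by all_goals exact hA.rank_lt t.2 q'.2

namespace Acyclic

variable (hA : Acyclic A)

theorem satisfies_stateFormula_of_mem_F {q : A.Q} (hq : q ∈ A.F) (M : KripkeModel α)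
    (v : M.World) : Satisfies M v (hA.stateFormula q) := by
  rw [stateFormula, if_pos hq]
  trivial

theorem satisfies_stateFormula_iff {q : A.Q} (hq : q ∉ A.F) (M : KripkeModel α) (v : M.World) :
    Satisfies M v (hA.stateFormula q) ↔ ∃ S, A.δ q (lab σ M v) S ∧
      (∀ q' ∈ S, ∃ v', M.R v v' ∧ Satisfies M v' (hA.stateFormula q')) ∧
      ∀ v', M.R v v' → ∃ q' ∈ S, Satisfies M v' (hA.stateFormula q') := by
  rw [stateFormula, if_neg hq, satisfies_bigOr]
  simp only [Satisfies, satisfies_bigAnd, satisfies_bigOr, Subtype.exists, Prod.exists]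
  constructor
  · rintro ⟨a, S, hδ, hlab, hdia, hbox⟩
    rw [satisfies_labelFormula (A.δ_lab _ _ _ hδ)] at hlab
    exact ⟨S, hlab ▸ hδ, fun q' hq' => hdia ⟨q', hq'⟩,
      fun v' hv' => by simpa using hbox v' hv'⟩
  · rintro ⟨S, hδ, hdia, hbox⟩
    refine ⟨_, S, hδ, (satisfies_labelFormula (A.δ_lab _ _ _ hδ) M v).2 rfl,
      fun q' => hdia q' q'.2, fun v' hv' => by simpa using hbox v' hv'⟩

theorem sig_stateFormula_subset (q : A.Q) : sig (hA.stateFormula q) ⊆ σ := by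
  induction q using hA.induction with
  | h q ih =>
    rw [stateFormula]
    split_ifs
    · simp [sig]
    · refine sig_bigOr_subset fun ⟨(a, S), hδ⟩ => ?_
      simp only [sig, Set.union_subset_iff]
      exact ⟨sig_labelFormula_subset a, sig_bigAnd_subset fun q' => ih a S hδ q' q'.2,
        sig_bigOr_subset fun q' => ih a S hδ q' q'.2⟩

theorem satisfies_stateFormula_of_acceptingRun {M : KripkeModel α} {w : M.World}
    {ρ : M.World → A.Q} (hρ : AcceptingRun A M w ρ) (v : M.World) :
    Satisfies M v (hA.stateFormula (ρ v)) := by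
  suffices ∀ q v, ρ v = q → Satisfies M v (hA.stateFormula q) from this _ v rfl
  intro q
  induction q using hA.induction with
  | h q ih =>
    rintro v rfl
    by_cases hF : ρ v ∈ A.F
    · exact hA.satisfies_stateFormula_of_mem_F hF M v
    have hδ := (hρ.2 v).resolve_left hF
    have hchild : ∀ v', M.R v v' → Satisfies M v' (hA.stateFormula (ρ v')) :=
      fun v' hv' => ih _ _ hδ _ ⟨v', hv', rfl⟩ v' rfl
    refine (hA.satisfies_stateFormula_iff hF M v).2 ⟨_, hδ, ?_, fun v' hv' => ?_⟩
    · rintro _ ⟨v', hv', rfl⟩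
      exact ⟨v', hv', hchild v' hv'⟩
    · exact ⟨_, ⟨v', hv', rfl⟩, hchild v' hv'⟩

theorem exists_childStates {M : KripkeModel α} {w : M.World} (hfat : IsFatSigmaTree σ M w)
    {u : M.World} {q : A.Q} (hu : Satisfies M u (hA.stateFormula q)) :
    ∃ f : M.World → A.Q, (∀ v, M.R u v → Satisfies M v (hA.stateFormula (f v))) ∧
      (q ∈ A.F ∨ A.δ q (lab σ M u) (f '' {v | M.R u v})) := by
  by_cases hF : q ∈ A.F
  · exact ⟨fun _ => q, fun v _ => hA.satisfies_stateFormula_of_mem_F hF M v, .inl hF⟩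
  obtain ⟨S, hδ, hdia, hbox⟩ := (hA.satisfies_stateFormula_iff hF M u).1 hu
  have : Nonempty A.Q := ⟨q⟩
  obtain ⟨f, hf, hfS⟩ := exists_image_eq_of_infinite S.toFinite hbox fun q' hq' => by
    obtain ⟨v, huv, hv⟩ := hdia q' hq'
    exact hfat.infinite_siblings_satisfying (hA.sig_stateFormula_subset q') huv hv
  exact ⟨f, hf, .inr (hfS ▸ hδ)⟩

theorem accepts_of_satisfies {M : KripkeModel α} {w : M.World} (hfat : IsFatSigmaTree σ M w)
    (hw : Satisfies M w (hA.stateFormula A.q₀)) : Accepts A M w := by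
  have hnext (u : M.World) (q : A.Q) : ∃ f : M.World → A.Q,
      Satisfies M u (hA.stateFormula q) →
        (∀ v, M.R u v → Satisfies M v (hA.stateFormula (f v))) ∧
        (q ∈ A.F ∨ A.δ q (lab σ M u) (f '' {v | M.R u v})) := by
    by_cases hu : Satisfies M u (hA.stateFormula q)
    · exact (hA.exists_childStates hfat hu).imp fun _ hf _ => hf
    · exact ⟨fun _ => q, fun h => absurd h hu⟩
  choose next hnext using hnext
  obtain ⟨ρ, hρw, hρR⟩ := hfat.1.1.exists_topDown A.q₀ next
  have hsat : ∀ v, Satisfies M v (hA.stateFormula (ρ v)) :=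
    hfat.1.1.induction (hρw ▸ hw) fun u v huv hu => hρR u v huv ▸ (hnext u _ hu).1 v huv
  refine ⟨ρ, hρw, fun v => ?_⟩
  have hchildren : {q | ∃ v', M.R v v' ∧ ρ v' = q} = next v (ρ v) '' {v' | M.R v v'} :=
    Set.image_congr fun v' hv' => hρR v v' hv'
  rw [hchildren]
  exact (hnext v _ (hsat v)).2

end Acyclic

/-- For every acyclic modal automaton over a finite signature σ there is a
modal formula that is satisfied by a fat σ-tree iff the tree is accepted. -/
theorem automaton_to_formula {α : Type} (σ : Finset α)
    (A : ModalAutomaton α σ) (hA : Acyclic A) :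
    ∃ χ : ModalFormula α, sig χ ⊆ ↑σ ∧
      ∀ (M : KripkeModel α) (w : M.World), IsFatSigmaTree σ M w →
        (Satisfies M w χ ↔ Accepts A M w) := by
  refine ⟨hA.stateFormula A.q₀, hA.sig_stateFormula_subset A.q₀, fun M w hfat => ?_⟩
  refine ⟨hA.accepts_of_satisfies hfat, ?_⟩
  rintro ⟨ρ, hρ⟩
  exact hρ.1 ▸ hA.satisfies_stateFormula_of_acceptingRun hρ w
end

section
/- Let A be a modal automaton over finite signature σ and let τ ⊆ σ. Then the projection Proj_τ(A) accepts precisely those τ-trees that are the τ-reduct of some σ-tree accepted by A. -/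
/-- The projection of a modal automaton over σ to a subsignature τ ⊆ σ:
each transition label `a` is replaced by `a ∩ τ`. -/
def proj {α : Type} {σ : Finset α} (A : ModalAutomaton α σ) (τ : Finset α)
    (hτ : τ ⊆ σ) : ModalAutomaton α τ where
  Q := A.Q
  finQ := A.finQ
  δ := fun q b S => ∃ a : Set α, A.δ q a S ∧ b = a ∩ ↑τ
  δ_lab := by rintro q b S ⟨a, _, rfl⟩; exact Set.inter_subset_right
  q₀ := A.q₀
  F := A.F

/-! A run of `Proj_τ(A)` on a model only records, at each world, some σ-label `a` of an
`A`-transition with `a ∩ τ` equal to the actual τ-label. Choosing such an `a` at every world and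
reading the valuation off these labels turns the same run into a run of `A` on a σ-expansion;
conversely a run of `A` on an expansion is a run of `Proj_τ(A)` on its τ-reduct. -/

section Projection

variable {α : Type} {σ τ : Finset α}

lemma lab_subset (M : KripkeModel α) (u : M.World) : lab τ M u ⊆ ↑τ :=
  fun _ hp => hp.1

lemma lab_inter_eq_of_eqOn {N : KripkeModel α} {V' : α → Set N.World} (hτ : τ ⊆ σ)
    (hV' : ∀ p ∈ (↑τ : Set α), V' p = N.V p) (u : N.World) :
    lab σ ⟨N.World, N.R, V'⟩ u ∩ ↑τ = lab τ N u := by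
  ext p
  simp only [lab, Set.mem_inter_iff, Set.mem_ofPred_eq, Finset.mem_coe]
  constructor
  · rintro ⟨⟨-, hu⟩, hp⟩
    exact ⟨hp, hV' p hp ▸ hu⟩
  · rintro ⟨hp, hu⟩
    exact ⟨⟨hτ hp, (hV' p hp).symm ▸ hu⟩, hp⟩

def valuationOfLabels {W : Type} (ℓ : W → Set α) : α → Set W :=
  fun p => {u | p ∈ ℓ u}

lemma lab_valuationOfLabels {W : Type} (R : W → W → Prop) {ℓ : W → Set α}
    (hℓ : ∀ u, ℓ u ⊆ ↑σ) (u : W) : lab σ ⟨W, R, valuationOfLabels ℓ⟩ u = ℓ u := by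
  ext p
  exact ⟨fun hp => hp.2, fun hp => ⟨hℓ u hp, hp⟩⟩

theorem AcceptingRun.proj_of_eqOn {A : ModalAutomaton α σ} (hτ : τ ⊆ σ) {N : KripkeModel α}
    {V' : α → Set N.World} (hV' : ∀ p ∈ (↑τ : Set α), V' p = N.V p) {v : N.World}
    {ρ : N.World → A.Q} (hρ : AcceptingRun A ⟨N.World, N.R, V'⟩ v ρ) :
    AcceptingRun (proj A τ hτ) N v ρ := by
  refine ⟨hρ.1, fun u => (hρ.2 u).imp_right fun hδ => ?_⟩
  exact ⟨_, hδ, (lab_inter_eq_of_eqOn hτ hV' u).symm⟩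

lemma exists_lift_of_proj {A : ModalAutomaton α σ} (hτ : τ ⊆ σ) {q : A.Q} {S : Set A.Q}
    {b : Set α} (hb : b ⊆ ↑τ) (h : q ∈ A.F ∨ (proj A τ hτ).δ q b S) :
    ∃ a ⊆ (↑σ : Set α), a ∩ ↑τ = b ∧ (q ∈ A.F ∨ A.δ q a S) := by
  rcases h with hF | ⟨a, hδ, rfl⟩
  · exact ⟨b, hb.trans (Finset.coe_subset.mpr hτ), Set.inter_eq_left.mpr hb, Or.inl hF⟩
  · exact ⟨a, A.δ_lab _ _ _ hδ, rfl, Or.inr hδ⟩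

theorem AcceptingRun.exists_lift {A : ModalAutomaton α σ} (hτ : τ ⊆ σ) {N : KripkeModel α}
    {v : N.World} {ρ : N.World → A.Q} (hρ : AcceptingRun (proj A τ hτ) N v ρ) :
    ∃ V' : α → Set N.World,
      (∀ p ∈ (↑τ : Set α), V' p = N.V p) ∧
      (∀ p ∉ (↑σ : Set α), V' p = ∅) ∧
      AcceptingRun A ⟨N.World, N.R, V'⟩ v ρ := by
  choose ℓ hℓσ hℓτ hℓδ using fun u => exists_lift_of_proj hτ (lab_subset N u) (hρ.2 u)
  refine ⟨valuationOfLabels ℓ, fun p hp => ?_, fun p hp => ?_, hρ.1, fun u => ?_⟩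
  · ext u
    have hlab : p ∈ ℓ u ∩ ↑τ ↔ p ∈ lab τ N u := by rw [hℓτ u]
    simpa [valuationOfLabels, lab, Finset.mem_coe.mp hp] using hlab
  · exact Set.eq_empty_of_forall_notMem fun u hu => hp (hℓσ u hu)
  · rw [lab_valuationOfLabels N.R hℓσ]
    exact hℓδ u

end Projection

theorem projection_accepts_general {α : Type} (σ : Finset α) (A : ModalAutomaton α σ)
    (τ : Finset α) (hτ : τ ⊆ σ)
    (N : KripkeModel α) (v : N.World) :
    Accepts (proj A τ hτ) N v ↔
      ∃ V' : α → Set N.World,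
        (∀ p ∈ (↑τ : Set α), V' p = N.V p) ∧
        (∀ p ∉ (↑σ : Set α), V' p = ∅) ∧
        Accepts A ⟨N.World, N.R, V'⟩ v := by
  constructor
  · rintro ⟨ρ, hρ⟩
    obtain ⟨V', hτV', hσV', hρ'⟩ := hρ.exists_lift hτ
    exact ⟨V', hτV', hσV', ρ, hρ'⟩
  · rintro ⟨V', hτV', -, ρ, hρ⟩
    exact ⟨ρ, hρ.proj_of_eqOn hτ hτV'⟩

/-- `Proj_τ(A)` accepts precisely those τ-trees that are the τ-reduct of a
σ-tree accepted by `A` (the σ-tree has the same worlds and relation, with a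
valuation `V'` over σ agreeing with the given one on τ). -/
theorem projection_accepts {α : Type} (σ : Finset α) (A : ModalAutomaton α σ)
    (τ : Finset α) (hτ : τ ⊆ σ)
    (N : KripkeModel α) (v : N.World) (hN : IsSigmaTree τ N v) :
    Accepts (proj A τ hτ) N v ↔
      ∃ V' : α → Set N.World,
        (∀ p ∈ (↑τ : Set α), V' p = N.V p) ∧
        (∀ p ∉ (↑σ : Set α), V' p = ∅) ∧
        Accepts A ⟨N.World, N.R, V'⟩ v :=
  projection_accepts_general σ A τ hτ N v
end

section
/- The class of all modal algebras is superamalgamable: for all modal algebras A₀, A₁, A₂ and embeddings h₁ : A₀ → A₁ and h₂ : A₀ → A₂, there exist a modal algebra A₃ and embeddings g₁ : A₁ → A₃ and g₂ : A₂ → A₃ with g₁∘h₁ = g₂∘h₂, such that moreover for {i,j} = {1,2} and all a ∈ A_i, b ∈ A_j, if g_i(a) ≤ g_j(b) in A₃ then there exists c ∈ A₀ with a ≤ h_i(c) in A_i and h_j(c) ≤ b in A_j. -/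
/-- A modal algebra: a Boolean algebra with a unary operation ◇ preserving
finite joins (`◇(a ⊔ b) = ◇a ⊔ ◇b` and `◇⊥ = ⊥`). -/
structure ModalAlgebra where
  carrier : Type
  [ba : BooleanAlgebra carrier]
  dia : carrier → carrier
  dia_sup : ∀ a b : carrier, dia (a ⊔ b) = dia a ⊔ dia b
  dia_bot : dia ⊥ = ⊥

attribute [instance] ModalAlgebra.ba

/-- A homomorphism of modal algebras: a Boolean algebra homomorphism commuting
with ◇. -/
structure ModalHom (A B : ModalAlgebra) where
  toFun : A.carrier → B.carrier
  map_sup : ∀ a b : A.carrier, toFun (a ⊔ b) = toFun a ⊔ toFun b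
  map_inf : ∀ a b : A.carrier, toFun (a ⊓ b) = toFun a ⊓ toFun b
  map_compl : ∀ a : A.carrier, toFun aᶜ = (toFun a)ᶜ
  map_bot : toFun ⊥ = ⊥
  map_top : toFun ⊤ = ⊤
  map_dia : ∀ a : A.carrier, toFun (A.dia a) = B.dia (toFun a)

/-!
Ultrafilters of a Boolean algebra are encoded as bounded lattice homomorphisms into `Prop`.
The amalgam is the complex algebra of the frame whose points are pairs `(x, y)` of ultrafilters
of `A₁` and `A₂` that agree on `A₀`, with `(x, y) R (x', y')` when both components are related
in the canonical frames; `A₁` and `A₂` embed by sending an element to the points at which it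
holds. That these embeddings preserve `◇` is a back-and-forth step: a canonical successor of `x`
can be matched by one of `y`, because `◇`-formulas over `A₀` are shared by `x` and `y`.
Superamalgamation is Craig interpolation: if no `c` has `a ≤ h₁ c` and `h₂ c ≤ b`, the prime
ideal theorem gives an ultrafilter `y ∋ bᶜ` containing `h₂ c` whenever `a ≤ h₁ c`; then
`h₁ c ⊓ a ≠ ⊥` whenever `h₂ c ∈ y`, so `y ∘ h₂` extends along `h₁` to an ultrafilter `x ∋ a`,
and `(x, y)` lies in `g₁ a` but not in `g₂ b`.
-/

open Order

section TwoValued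

variable {α β : Type*} [BooleanAlgebra α] [BooleanAlgebra β]

namespace BoundedLatticeHom

variable (x : BoundedLatticeHom α Prop) {a b : α}

theorem map_inf_iff : x (a ⊓ b) ↔ x a ∧ x b := by
  rw [map_inf]; rfl

theorem map_compl_iff : x aᶜ ↔ ¬ x a := by
  rw [map_compl']; rfl

theorem not_map_bot : ¬ x ⊥ := by
  rw [map_bot]; exact id

theorem map_top_prop : x ⊤ := by
  rw [map_top]; trivial

theorem map_of_le (h : a ≤ b) : x a → x b :=
  OrderHomClass.mono x h

theorem ne_bot_of_map (ha : x a) : a ≠ ⊥ := by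
  rintro rfl; exact x.not_map_bot ha

end BoundedLatticeHom

def Order.Ideal.IsPrime.toBoundedLatticeHom {J : Ideal α} (hJ : J.IsPrime) :
    BoundedLatticeHom α Prop where
  toFun a := a ∉ J
  map_sup' a b := propext <| by
    simp only [Ideal.sup_mem_iff, not_and_or]; rfl
  map_inf' a b := propext <| by
    refine ⟨fun h => ⟨fun ha => h (J.lower inf_le_left ha),
      fun hb => h (J.lower inf_le_right hb)⟩, fun h hab => (hJ.mem_or_mem hab).elim h.1 h.2⟩
  map_top' := propext (iff_true_intro hJ.top_notMem)
  map_bot' := propext (iff_false_intro (not_not_intro J.bot_mem))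

theorem exists_boundedLatticeHom_prop_of_inf_ne_bot {s t : Set α}
    (hs : s.Nonempty) (hs' : DirectedOn (· ≥ ·) s)
    (ht : t.Nonempty) (ht' : DirectedOn (· ≥ ·) t)
    (hst : ∀ a ∈ s, ∀ b ∈ t, a ⊓ b ≠ ⊥) :
    ∃ x : BoundedLatticeHom α Prop, (∀ a ∈ s, x a) ∧ ∀ b ∈ t, x b := by
  obtain ⟨a₀, ha₀⟩ := hs
  obtain ⟨b₀, hb₀⟩ := ht
  have hF : IsPFilter {c : α | ∃ a ∈ s, ∃ b ∈ t, a ⊓ b ≤ c} := by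
    refine IsPFilter.of_def ⟨_, a₀, ha₀, b₀, hb₀, le_rfl⟩ ?_
      fun hcd ⟨a, ha, b, hb, h⟩ => ⟨a, ha, b, hb, h.trans hcd⟩
    rintro c ⟨a, ha, b, hb, hc⟩ d ⟨a', ha', b', hb', hd⟩
    obtain ⟨a'', ha'', haa, haa'⟩ := hs' a ha a' ha'
    obtain ⟨b'', hb'', hbb, hbb'⟩ := ht' b hb b' hb'
    exact ⟨a'' ⊓ b'', ⟨a'', ha'', b'', hb'', le_rfl⟩,
      (inf_le_inf haa hbb).trans hc, (inf_le_inf haa' hbb').trans hd⟩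
  have hdisj : Disjoint (hF.toPFilter : Set α) (Ideal.principal (⊥ : α) : Set α) := by
    refine Set.disjoint_left.2 fun c ⟨a, ha, b, hb, hc⟩ hc' => hst a ha b hb ?_
    exact le_bot_iff.1 (hc.trans hc')
  obtain ⟨J, hJ, -, hFJ⟩ := DistribLattice.prime_ideal_of_disjoint_filter_ideal hdisj
  refine ⟨hJ.toBoundedLatticeHom, fun a ha => ?_, fun b hb => ?_⟩
  · exact Set.disjoint_left.1 hFJ ⟨a, ha, b₀, hb₀, inf_le_left⟩
  · exact Set.disjoint_left.1 hFJ ⟨a₀, ha₀, b, hb, inf_le_right⟩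

namespace BoundedLatticeHom

theorem exists_map_and_not_map {a b : α} (hab : ¬ a ≤ b) :
    ∃ x : BoundedLatticeHom α Prop, x a ∧ ¬ x b := by
  obtain ⟨x, hxa, hxb⟩ := exists_boundedLatticeHom_prop_of_inf_ne_bot (Set.singleton_nonempty a)
    infClosed_singleton.codirectedOn (Set.singleton_nonempty bᶜ) infClosed_singleton.codirectedOn
    (by rintro _ rfl _ rfl h; exact hab (disjoint_compl_right_iff.1 (disjoint_iff.2 h)))
  exact ⟨x, hxa a rfl, x.map_compl_iff.1 (hxb bᶜ rfl)⟩

variable (f : BoundedLatticeHom α β)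

theorem exists_comp_eq (u : BoundedLatticeHom α Prop) {t : Set β} (ht : t.Nonempty)
    (ht' : DirectedOn (· ≥ ·) t) (hut : ∀ c, u c → ∀ b ∈ t, f c ⊓ b ≠ ⊥) :
    ∃ x : BoundedLatticeHom β Prop, x.comp f = u ∧ ∀ b ∈ t, x b := by
  have hu : InfClosed {c | u c} := fun a ha b hb => u.map_inf_iff.2 ⟨ha, hb⟩
  obtain ⟨x, hxu, hxt⟩ := exists_boundedLatticeHom_prop_of_inf_ne_bot
    ⟨_, Set.mem_image_of_mem f u.map_top_prop⟩ (hu.image f).codirectedOn ht ht'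
    (by rintro _ ⟨c, hc, rfl⟩ b hb; exact hut c hc b hb)
  refine ⟨x, BoundedLatticeHom.ext fun c =>
    propext ⟨fun hc => ?_, fun hc => hxu _ ⟨c, hc, rfl⟩⟩, hxt⟩
  by_contra hnc
  have : x (f cᶜ) := hxu _ ⟨cᶜ, u.map_compl_iff.2 hnc, rfl⟩
  rw [map_compl', x.map_compl_iff] at this
  exact this hc

theorem exists_comp_eq_of_injective (hf : Function.Injective f) (u : BoundedLatticeHom α Prop) :
    ∃ x : BoundedLatticeHom β Prop, x.comp f = u := by
  obtain ⟨x, hx, -⟩ :=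
    f.exists_comp_eq u (Set.singleton_nonempty ⊤) infClosed_singleton.codirectedOn
    (by rintro c hc _ rfl; rw [inf_top_eq, ← map_bot f, hf.ne_iff]; exact u.ne_bot_of_map hc)
  exact ⟨x, hx⟩

theorem exists_interpolant {γ : Type*} [BooleanAlgebra γ] (f : BoundedLatticeHom γ α)
    (g : BoundedLatticeHom γ β) {a : α} {b : β}
    (hab : ∀ (x : BoundedLatticeHom α Prop) (y : BoundedLatticeHom β Prop),
      x.comp f = y.comp g → x a → y b) :
    ∃ c, a ≤ f c ∧ g c ≤ b := by
  by_contra! hno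
  have hT : InfClosed {c | a ≤ f c} := fun c hc d hd => by
    simpa only [Set.mem_ofPred_eq, map_inf] using le_inf hc hd
  obtain ⟨y, hyT, hyb⟩ := exists_boundedLatticeHom_prop_of_inf_ne_bot
    ⟨_, Set.mem_image_of_mem g (show a ≤ f ⊤ by simp)⟩ (hT.image g).codirectedOn
    (Set.singleton_nonempty bᶜ) infClosed_singleton.codirectedOn
    (by rintro _ ⟨c, hc, rfl⟩ _ rfl h
        exact hno c hc (disjoint_compl_right_iff.1 (disjoint_iff.2 h)))
  obtain ⟨x, hxy, hxa⟩ := f.exists_comp_eq (y.comp g) (Set.singleton_nonempty a)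
    infClosed_singleton.codirectedOn fun c hc _ ha h => by
      rw [Set.mem_singleton_iff.1 ha, inf_comm] at h
      have hac : a ≤ f cᶜ := by
        rw [map_compl']; exact le_compl_iff_disjoint_right.2 (disjoint_iff.2 h)
      have hyc := hyT _ ⟨cᶜ, hac, rfl⟩
      rw [map_compl', y.map_compl_iff] at hyc
      exact hyc hc
  exact y.map_compl_iff.1 (hyb bᶜ rfl) (hab x y hxy (hxa a rfl))

end BoundedLatticeHom

end TwoValued

namespace ModalAlgebra

variable (A : ModalAlgebra)

def box (a : A.carrier) : A.carrier := (A.dia aᶜ)ᶜ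

theorem dia_mono : Monotone A.dia := fun a b hab => by
  rw [← sup_eq_right.2 hab, A.dia_sup]; exact le_sup_left

theorem box_inf (a b : A.carrier) : A.box (a ⊓ b) = A.box a ⊓ A.box b := by
  rw [box, compl_inf, A.dia_sup, compl_sup, box, box]

theorem box_top : A.box ⊤ = ⊤ := by
  rw [box, compl_top, A.dia_bot, compl_bot]

theorem box_inf_dia_le (b d : A.carrier) : A.box b ⊓ A.dia d ≤ A.dia (b ⊓ d) := by
  calc A.box b ⊓ A.dia d
      = A.box b ⊓ (A.dia (b ⊓ d) ⊔ A.dia (bᶜ ⊓ d)) := by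
        rw [← A.dia_sup, ← inf_sup_right, sup_compl_eq_top, top_inf_eq]
    _ ≤ A.dia (b ⊓ d) ⊔ (A.dia bᶜ)ᶜ ⊓ A.dia bᶜ := by
        rw [inf_sup_left]
        exact sup_le_sup inf_le_right (inf_le_inf_left _ (A.dia_mono inf_le_left))
    _ = A.dia (b ⊓ d) := by rw [compl_inf_self, sup_bot_eq]

def CanonicalRel (x x' : BoundedLatticeHom A.carrier Prop) : Prop :=
  ∀ a, x' a → x (A.dia a)

variable {A} (x : BoundedLatticeHom A.carrier Prop)

theorem canonicalRel_of_box {x' : BoundedLatticeHom A.carrier Prop}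
    (h : ∀ b, x (A.box b) → x' b) : A.CanonicalRel x x' := fun a ha => by
  by_contra hna
  have := h aᶜ (by rw [box, compl_compl, x.map_compl_iff]; exact hna)
  exact x'.map_compl_iff.1 this ha

theorem infClosed_box : InfClosed {b | x (A.box b)} := fun a ha b hb => by
  simpa only [Set.mem_ofPred_eq, box_inf, x.map_inf_iff] using And.intro ha hb

theorem box_nonempty : {b | x (A.box b)}.Nonempty :=
  ⟨⊤, by simpa only [Set.mem_ofPred_eq, box_top] using x.map_top_prop⟩

theorem inf_ne_bot_of_box_of_dia {b d : A.carrier} (hb : x (A.box b)) (hd : x (A.dia d)) :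
    b ⊓ d ≠ ⊥ := by
  rintro h
  have := x.map_of_le (A.box_inf_dia_le b d) (x.map_inf_iff.2 ⟨hb, hd⟩)
  rw [h, A.dia_bot] at this
  exact x.not_map_bot this

theorem exists_canonicalRel {a : A.carrier} (ha : x (A.dia a)) :
    ∃ x', A.CanonicalRel x x' ∧ x' a := by
  obtain ⟨x', hbox, hxa⟩ := exists_boundedLatticeHom_prop_of_inf_ne_bot (box_nonempty x)
    (infClosed_box x).codirectedOn (Set.singleton_nonempty a) infClosed_singleton.codirectedOn
    fun b hb _ hd => by rw [Set.mem_singleton_iff.1 hd]; exact inf_ne_bot_of_box_of_dia x hb ha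
  exact ⟨x', canonicalRel_of_box x hbox, hxa a rfl⟩

def complexAlgebra {W : Type} (R : W → W → Prop) : ModalAlgebra where
  carrier := Set W
  dia U := {w | ∃ v ∈ U, R w v}
  dia_sup U V := by
    ext w
    simp only [Set.sup_eq_union, Set.mem_union, Set.mem_ofPred_eq]
    constructor
    · rintro ⟨v, hv | hv, hR⟩
      exacts [.inl ⟨v, hv, hR⟩, .inr ⟨v, hv, hR⟩]
    · rintro (⟨v, hv, hR⟩ | ⟨v, hv, hR⟩)
      exacts [⟨v, .inl hv, hR⟩, ⟨v, .inr hv, hR⟩]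
  dia_bot := by
    ext w
    simp [Set.bot_eq_empty]

end ModalAlgebra

namespace ModalHom

variable {A B : ModalAlgebra}

def toBoundedLatticeHom (h : ModalHom A B) : BoundedLatticeHom A.carrier B.carrier where
  toFun := h.toFun
  map_sup' := h.map_sup
  map_inf' := h.map_inf
  map_top' := h.map_top
  map_bot' := h.map_bot

@[simp]
theorem coe_toBoundedLatticeHom (h : ModalHom A B) : ⇑h.toBoundedLatticeHom = h.toFun := rfl

def ofPoints {W : Type} (R : W → W → Prop) (π : W → BoundedLatticeHom A.carrier Prop)
    (hπ : ∀ w a, π w (A.dia a) ↔ ∃ v, π v a ∧ R w v) :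
    ModalHom A (ModalAlgebra.complexAlgebra R) where
  toFun a := {w | π w a}
  map_sup a b := Set.ext fun w => iff_of_eq (SupHomClass.map_sup (π w) a b)
  map_inf a b := Set.ext fun w => iff_of_eq (InfHomClass.map_inf (π w) a b)
  map_compl a := Set.ext fun w => iff_of_eq (map_compl' (π w) a)
  map_bot := Set.ext fun w => iff_of_eq (BotHomClass.map_bot (π w))
  map_top := Set.ext fun w => iff_of_eq (TopHomClass.map_top (π w))
  map_dia a := Set.ext fun w => hπ w a

theorem ofPoints_injective {W : Type} {R : W → W → Prop}
    {π : W → BoundedLatticeHom A.carrier Prop} (hπ : ∀ w a, π w (A.dia a) ↔ ∃ v, π v a ∧ R w v)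
    (hsurj : Function.Surjective π) : Function.Injective (ofPoints R π hπ).toFun := by
  suffices ∀ a b,
      (ofPoints R π hπ).toFun a ≤ (ofPoints R π hπ).toFun b → a ≤ b from
    fun a b hab => le_antisymm (this a b hab.le) (this b a hab.ge)
  intro a b hab
  by_contra hnab
  obtain ⟨x, hxa, hxb⟩ := BoundedLatticeHom.exists_map_and_not_map hnab
  obtain ⟨w, rfl⟩ := hsurj x
  exact hxb (hab hxa)

end ModalHom

section Amalgam

variable {A₀ A₁ A₂ : ModalAlgebra} (h₁ : ModalHom A₀ A₁) (h₂ : ModalHom A₀ A₂)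

theorem exists_canonicalRel_comp_eq {x x' : BoundedLatticeHom A₁.carrier Prop}
    {y : BoundedLatticeHom A₂.carrier Prop}
    (hxy : x.comp h₁.toBoundedLatticeHom = y.comp h₂.toBoundedLatticeHom)
    (hxx' : A₁.CanonicalRel x x') :
    ∃ y', A₂.CanonicalRel y y' ∧
      x'.comp h₁.toBoundedLatticeHom = y'.comp h₂.toBoundedLatticeHom := by
  obtain ⟨y', hy', hbox⟩ :=
    h₂.toBoundedLatticeHom.exists_comp_eq (x'.comp h₁.toBoundedLatticeHom)
    (ModalAlgebra.box_nonempty y) (ModalAlgebra.infClosed_box y).codirectedOn fun c hc b hb => by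
      have hdia : y (A₂.dia (h₂.toFun c)) := by
        have hc' := DFunLike.congr_fun hxy (A₀.dia c)
        simp only [BoundedLatticeHom.comp_apply, ModalHom.coe_toBoundedLatticeHom,
          ModalHom.map_dia] at hc hc'
        exact hc' ▸ hxx' _ hc
      rw [inf_comm]
      exact ModalAlgebra.inf_ne_bot_of_box_of_dia y hb hdia
  exact ⟨y', ModalAlgebra.canonicalRel_of_box y hbox, hy'.symm⟩

def CompatiblePair : Type :=
  {p : BoundedLatticeHom A₁.carrier Prop × BoundedLatticeHom A₂.carrier Prop //
    p.1.comp h₁.toBoundedLatticeHom = p.2.comp h₂.toBoundedLatticeHom}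

def CompatiblePair.Rel (p q : CompatiblePair h₁ h₂) : Prop :=
  A₁.CanonicalRel p.1.1 q.1.1 ∧ A₂.CanonicalRel p.1.2 q.1.2

def amalgam : ModalAlgebra := ModalAlgebra.complexAlgebra (CompatiblePair.Rel h₁ h₂)

def amalgamInl : ModalHom A₁ (amalgam h₁ h₂) :=
  ModalHom.ofPoints _ (fun p => p.1.1) fun p a => by
    refine ⟨fun ha => ?_, fun ⟨q, hqa, hpq⟩ => hpq.1 a hqa⟩
    obtain ⟨x', hx', hx'a⟩ := ModalAlgebra.exists_canonicalRel p.1.1 ha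
    obtain ⟨y', hy', hx'y'⟩ := exists_canonicalRel_comp_eq h₁ h₂ p.2 hx'
    exact ⟨⟨(x', y'), hx'y'⟩, hx'a, hx', hy'⟩

def amalgamInr : ModalHom A₂ (amalgam h₁ h₂) :=
  ModalHom.ofPoints _ (fun p => p.1.2) fun p a => by
    refine ⟨fun ha => ?_, fun ⟨q, hqa, hpq⟩ => hpq.2 a hqa⟩
    obtain ⟨y', hy', hy'a⟩ := ModalAlgebra.exists_canonicalRel p.1.2 ha
    obtain ⟨x', hx', hy'x'⟩ := exists_canonicalRel_comp_eq h₂ h₁ p.2.symm hy'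
    exact ⟨⟨(x', y'), hy'x'.symm⟩, hy'a, hx', hy'⟩

end Amalgam

/-- The class of all modal algebras is superamalgamable. -/
theorem modal_algebras_superamalgamable
    (A₀ A₁ A₂ : ModalAlgebra) (h₁ : ModalHom A₀ A₁) (h₂ : ModalHom A₀ A₂)
    (inj₁ : Function.Injective h₁.toFun) (inj₂ : Function.Injective h₂.toFun) :
    ∃ (A₃ : ModalAlgebra) (g₁ : ModalHom A₁ A₃) (g₂ : ModalHom A₂ A₃),
      Function.Injective g₁.toFun ∧ Function.Injective g₂.toFun ∧
      (∀ a : A₀.carrier, g₁.toFun (h₁.toFun a) = g₂.toFun (h₂.toFun a)) ∧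
      (∀ (a : A₁.carrier) (b : A₂.carrier), g₁.toFun a ≤ g₂.toFun b →
        ∃ c : A₀.carrier, a ≤ h₁.toFun c ∧ h₂.toFun c ≤ b) ∧
      (∀ (a : A₂.carrier) (b : A₁.carrier), g₂.toFun a ≤ g₁.toFun b →
        ∃ c : A₀.carrier, a ≤ h₂.toFun c ∧ h₁.toFun c ≤ b) := by
  refine ⟨amalgam h₁ h₂, amalgamInl h₁ h₂, amalgamInr h₁ h₂, ?_, ?_, ?_, ?_, ?_⟩
  · refine ModalHom.ofPoints_injective _ fun x => ?_
    obtain ⟨y, hy⟩ := h₂.toBoundedLatticeHom.exists_comp_eq_of_injective inj₂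
      (x.comp h₁.toBoundedLatticeHom)
    exact ⟨⟨(x, y), hy.symm⟩, rfl⟩
  · refine ModalHom.ofPoints_injective _ fun y => ?_
    obtain ⟨x, hx⟩ := h₁.toBoundedLatticeHom.exists_comp_eq_of_injective inj₁
      (y.comp h₂.toBoundedLatticeHom)
    exact ⟨⟨(x, y), hx⟩, rfl⟩
  · exact fun c => Set.ext fun p => iff_of_eq (DFunLike.congr_fun p.2 c)
  · exact fun a b hab => BoundedLatticeHom.exists_interpolant _ _ fun x y hxy hxa =>
      hab (a := ⟨(x, y), hxy⟩) hxa
  · exact fun a b hab => BoundedLatticeHom.exists_interpolant _ _ fun y x hyx hya =>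
      hab (a := ⟨(x, y), hyx.symm⟩) hya
end
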